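/- arXiv:1808.08749 — 13 statements merged into one kernel-verified Lean document; each statement's English description precedes it below -/
import Mathlib

section
/- Let S, I, R, B : [0,∞) → ℝ be a solution of the SIRB system S' = −βSI, I' = βSI − γI + βσαIR, R' = γI − βσIR, B' = βσ(1−α)IR with β>0, γ>0, σ>0, 0<α<1, initial conditions S(0)>0, I(0)>0, R(0)≥0, B(0)≥0, S(0)+I(0)+R(0)+B(0)=1, and suppose S(t)>0 and I(t)>0 for all t≥0. Then for every t≥0, R(t) = (γ/(σβ))·(1 − (1 − (σβ/γ)·R(0))·(S(t)/S(0))^σ). -/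
/-! Writing `R' = βσI (C − R)` with `C = γ/(σβ)` and `S' = −βI S`, the quantity `(R − C)·S^(−σ)`
has derivative zero, so it is conserved along the solution; solving for `R` gives the formula. -/

open Real

theorem hasDerivAt_sub_mul_rpow_neg_eq_zero {S R : ℝ → ℝ} {a σ C t : ℝ}
    (hS : HasDerivAt S (-(a * S t)) t) (hR : HasDerivAt R (a * σ * (C - R t)) t)
    (hSt : S t ≠ 0) : HasDerivAt (fun u => (R u - C) * S u ^ (-σ)) 0 t := by
  have hpow : HasDerivAt (fun u => S u ^ (-σ)) (-(a * S t) * (-σ) * S t ^ (-σ - 1)) t :=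
    hS.rpow_const (Or.inl hSt)
  refine ((hR.sub_const C).mul hpow).congr_deriv ?_
  rw [rpow_sub_one hSt]
  field_simp
  ring

theorem eq_add_mul_div_rpow_of_sub_mul_rpow_neg_eq {r r₀ x x₀ σ C : ℝ} (hx : 0 < x)
    (hx₀ : 0 < x₀) (h : (r - C) * x ^ (-σ) = (r₀ - C) * x₀ ^ (-σ)) :
    r = C + (r₀ - C) * (x / x₀) ^ σ := by
  have hxσ : 0 < x ^ σ := rpow_pos_of_pos hx σ
  have hx₀σ : 0 < x₀ ^ σ := rpow_pos_of_pos hx₀ σ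
  rw [rpow_neg hx.le, rpow_neg hx₀.le] at h
  rw [div_rpow hx.le hx₀.le]
  field_simp at h ⊢
  linear_combination h

theorem sirb_R_in_terms_of_S_general (β γ σ : ℝ) (S I R : ℝ → ℝ)
    (hβ : 0 < β) (hγ : 0 < γ) (hσ : 0 < σ)
    (hS' : ∀ t : ℝ, 0 ≤ t → HasDerivAt S (-(β * S t * I t)) t)
    (hR' : ∀ t : ℝ, 0 ≤ t → HasDerivAt R (γ * I t - β * σ * I t * R t) t)
    (hSpos : ∀ t : ℝ, 0 ≤ t → 0 < S t) :
    ∀ t : ℝ, 0 ≤ t →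
      R t = γ / (σ * β) * (1 - (1 - σ * β / γ * R 0) * (S t / S 0) ^ σ) := by
  intro t ht
  set C := γ / (σ * β)
  have hderiv : ∀ s, 0 ≤ s → HasDerivAt (fun u => (R u - C) * S u ^ (-σ)) 0 s := by
    intro s hs
    refine hasDerivAt_sub_mul_rpow_neg_eq_zero (a := β * I s) ?_ ?_ (hSpos s hs).ne'
    · exact (hS' s hs).congr_deriv (by ring)
    · exact (hR' s hs).congr_deriv (by simp only [C]; field_simp)
  have hconst : (R t - C) * S t ^ (-σ) = (R 0 - C) * S 0 ^ (-σ) :=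
    constant_of_has_deriv_right_zero
      (fun s hs => (hderiv s hs.1).continuousAt.continuousWithinAt)
      (fun s hs => (hderiv s hs.1).hasDerivWithinAt) t ⟨ht, le_rfl⟩
  rw [eq_add_mul_div_rpow_of_sub_mul_rpow_neg_eq (hSpos t ht) (hSpos 0 le_rfl) hconst]
  simp only [C]
  field_simp
  ring

/-- Along solutions of the SIRB system, the recovered proportion is
determined by the susceptible proportion:
`R t = (γ/(σβ))·(1 − (1 − (σβ/γ)·R 0)·(S t / S 0)^σ)` for all `t ≥ 0`. -/
theorem sirb_R_in_terms_of_S (β γ σ α : ℝ) (S I R B : ℝ → ℝ)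
    (hβ : 0 < β) (hγ : 0 < γ) (hσ : 0 < σ) (hα0 : 0 < α) (hα1 : α < 1)
    (hS' : ∀ t : ℝ, 0 ≤ t → HasDerivAt S (-(β * S t * I t)) t)
    (hI' : ∀ t : ℝ, 0 ≤ t → HasDerivAt I (β * S t * I t - γ * I t + β * σ * α * I t * R t) t)
    (hR' : ∀ t : ℝ, 0 ≤ t → HasDerivAt R (γ * I t - β * σ * I t * R t) t)
    (hB' : ∀ t : ℝ, 0 ≤ t → HasDerivAt B (β * σ * (1 - α) * I t * R t) t)
    (hS0 : 0 < S 0) (hI0 : 0 < I 0) (hR0 : 0 ≤ R 0) (hB0 : 0 ≤ B 0)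
    (hsum : S 0 + I 0 + R 0 + B 0 = 1)
    (hSpos : ∀ t : ℝ, 0 ≤ t → 0 < S t) (hIpos : ∀ t : ℝ, 0 ≤ t → 0 < I t) :
    ∀ t : ℝ, 0 ≤ t →
      R t = γ / (σ * β) * (1 - (1 - σ * β / γ * R 0) * (S t / S 0) ^ σ) :=
  sirb_R_in_terms_of_S_general β γ σ S I R hβ hγ hσ hS' hR' hSpos
end

section
/- Let β>0, γ>0, σ>0, 0<α<1, S₀>0, R₀ᵢₙᵢₜ≥0, define r(S) := (γ/(σβ))·(1 − (1 − (σβ/γ)·R₀ᵢₙᵢₜ)·(S/S₀)^σ) and R̂(S) := (β/γ)·(S + ασ·r(S)) for 0≤S≤S₀. Assume R̂(S₀) = (β/γ)·(S₀ + ασR₀ᵢₙᵢₜ) > 1. Then R̂(0) = α < 1 < R̂(S₀), and there exists a unique S* with 0 < S* < S₀ such that R̂(S*) = 1. -/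
/-!
Substituting `r`, one gets `R̂(S) = (β/γ) S + α - α (1 - (σβ/γ) R₀) (S/S₀)^σ`: an affine function
plus a multiple of `S^σ`, hence convex or concave on `[0, S₀]`. As `R̂(0) = α < 1 < R̂(S₀)`, the
intermediate value theorem gives a root, and a convex function lying below the level `1` at the
left endpoint (or a concave one lying above it at the right endpoint) reaches that level only once.
-/

open Set

theorem ConvexOn.mem_Ioo_of_apply_lt {s : Set ℝ} {f : ℝ → ℝ} {x y c m : ℝ}
    (hf : ConvexOn ℝ s f) (hx : x ∈ s) (hy : y ∈ s) (hc : c ∈ s) (hxy : x < y)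
    (hfx : f x = m) (hfy : f y = m) (hfc : f c < m) : c ∈ Ioo x y := by
  refine ⟨lt_of_not_ge fun hcx => ?_, lt_of_not_ge fun hyc => ?_⟩
  · obtain rfl | hcx := hcx.eq_or_lt
    · exact hfc.ne hfx
    have hx_mem : x ∈ openSegment ℝ c y := by
      rw [openSegment_eq_Ioo (hcx.trans hxy)]
      exact ⟨hcx, hxy⟩
    exact (hf.lt_right_of_left_lt hc hy hx_mem (hfx ▸ hfc)).ne (hfx.trans hfy.symm)
  · obtain rfl | hyc := hyc.eq_or_lt
    · exact hfc.ne hfy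
    have hy_mem : y ∈ openSegment ℝ x c := by
      rw [openSegment_eq_Ioo (hxy.trans hyc)]
      exact ⟨hxy, hyc⟩
    exact (hf.lt_left_of_right_lt hx hc hy_mem (hfy ▸ hfc)).ne (hfy.trans hfx.symm)

theorem existsUnique_mem_Ioo_apply_eq_of_convexOn_or_concaveOn {f : ℝ → ℝ} {a b m : ℝ}
    (hab : a ≤ b) (hcont : ContinuousOn f (Icc a b))
    (hconv : ConvexOn ℝ (Icc a b) f ∨ ConcaveOn ℝ (Icc a b) f) (ha : f a < m) (hb : m < f b) :
    ∃! x, x ∈ Ioo a b ∧ f x = m := by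
  have not_lt_of_roots : ∀ x ∈ Ioo a b, ∀ y ∈ Ioo a b, f x = m → f y = m → ¬ x < y := by
    intro x hx y hy hfx hfy hxy
    rcases hconv with hconv | hconc
    · have := hconv.mem_Ioo_of_apply_lt (Ioo_subset_Icc_self hx) (Ioo_subset_Icc_self hy)
        (left_mem_Icc.2 hab) hxy hfx hfy ha
      exact this.1.not_gt hx.1
    · have := hconc.neg.mem_Ioo_of_apply_lt (Ioo_subset_Icc_self hx) (Ioo_subset_Icc_self hy)
        (right_mem_Icc.2 hab) hxy (by simp [hfx]) (by simp [hfy]) (neg_lt_neg hb)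
      exact this.2.not_gt hy.2
  obtain ⟨x, hx, hfx⟩ := intermediate_value_Ioo hab hcont ⟨ha, hb⟩
  exact ⟨x, ⟨hx, hfx⟩, fun y ⟨hy, hfy⟩ =>
    le_antisymm (not_lt.1 (not_lt_of_roots x hx y hy hfx hfy))
      (not_lt.1 (not_lt_of_roots y hy x hx hfy hfx))⟩

theorem convexOn_or_concaveOn_affine_add_mul_rpow (a b k : ℝ) {p : ℝ} (hp : 0 ≤ p) :
    ConvexOn ℝ (Ici 0) (fun x : ℝ => a * x + b + k * x ^ p) ∨
      ConcaveOn ℝ (Ici 0) (fun x : ℝ => a * x + b + k * x ^ p) := by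
  have hconv : ConvexOn ℝ (Ici (0:ℝ)) (fun x => a * x + b) :=
    ((LinearMap.lsmul ℝ ℝ a).convexOn (convex_Ici 0)).add_const b
  have hconc : ConcaveOn ℝ (Ici (0:ℝ)) (fun x => a * x + b) :=
    ((LinearMap.lsmul ℝ ℝ a).concaveOn (convex_Ici 0)).add_const b
  have hpow : ConvexOn ℝ (Ici 0) (fun x : ℝ => x ^ p) ∨ ConcaveOn ℝ (Ici 0) (fun x : ℝ => x ^ p) :=
    (le_total 1 p).imp convexOn_rpow (Real.concaveOn_rpow hp)
  have hmul : ConvexOn ℝ (Ici 0) (fun x : ℝ => k * x ^ p) ∨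
      ConcaveOn ℝ (Ici 0) (fun x : ℝ => k * x ^ p) := by
    rcases le_total 0 k with hk | hk
    · exact hpow.imp (·.smul hk) (·.smul hk)
    · have hk' := neg_nonneg.2 hk
      exact hpow.symm.imp (fun h => (h.smul hk').neg.congr fun x _ => by simp)
        (fun h => (h.smul hk').neg.congr fun x _ => by simp)
  exact hmul.imp hconv.add hconc.add

theorem sirb_Rhat_eq {β γ σ α S₀ R₀init : ℝ} {r Rhat : ℝ → ℝ}
    (hβ : β ≠ 0) (hγ : γ ≠ 0) (hσ : σ ≠ 0)
    (hr : ∀ S : ℝ, r S = γ / (σ * β) * (1 - (1 - σ * β / γ * R₀init) * (S / S₀) ^ σ))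
    (hRhat : ∀ S : ℝ, Rhat S = β / γ * (S + α * σ * r S)) (S : ℝ) :
    Rhat S = β / γ * S + α - α * (1 - σ * β / γ * R₀init) * (S / S₀) ^ σ := by
  rw [hRhat, hr]
  field_simp
  ring

theorem sirb_unique_root_R0_gt_one_general (β γ σ α S₀ R₀init : ℝ)
    (hβ : 0 < β) (hγ : 0 < γ) (hσ : 0 < σ) (hα1 : α < 1)
    (hS₀ : 0 < S₀)
    (r Rhat : ℝ → ℝ)
    (hr : ∀ S : ℝ, r S = γ / (σ * β) * (1 - (1 - σ * β / γ * R₀init) * (S / S₀) ^ σ))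
    (hRhat : ∀ S : ℝ, Rhat S = β / γ * (S + α * σ * r S))
    (hR0gt : 1 < β / γ * (S₀ + α * σ * R₀init)) :
    Rhat 0 = α ∧ α < 1 ∧ 1 < Rhat S₀ ∧
      ∃! Sstar : ℝ, Sstar ∈ Set.Ioo 0 S₀ ∧ Rhat Sstar = 1 := by
  have hform := sirb_Rhat_eq hβ.ne' hγ.ne' hσ.ne' hr hRhat
  have hRhat_zero : Rhat 0 = α := by
    rw [hform, zero_div, Real.zero_rpow hσ.ne']
    ring
  have hRhat_S₀ : 1 < Rhat S₀ := by
    convert hR0gt using 1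
    rw [hform, div_self hS₀.ne', Real.one_rpow]
    field_simp
    ring
  set k := -(α * (1 - σ * β / γ * R₀init)) / S₀ ^ σ
  have hshape : EqOn (fun S => β / γ * S + α + k * S ^ σ) Rhat (Icc 0 S₀) := fun S hS => by
    rw [hform, Real.div_rpow hS.1 hS₀.le]
    ring
  have hcont : Continuous fun S : ℝ => β / γ * S + α + k * S ^ σ := by
    have := Real.continuous_rpow_const hσ.le
    fun_prop
  refine ⟨hRhat_zero, hα1, hRhat_S₀, ?_⟩
  refine existsUnique_mem_Ioo_apply_eq_of_convexOn_or_concaveOn hS₀.le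
    (hcont.continuousOn.congr hshape.symm) ?_ (hRhat_zero ▸ hα1) hRhat_S₀
  exact (convexOn_or_concaveOn_affine_add_mul_rpow _ _ k hσ.le).imp
    (fun h => (h.subset Icc_subset_Ici_self (convex_Icc 0 S₀)).congr hshape)
    (fun h => (h.subset Icc_subset_Ici_self (convex_Icc 0 S₀)).congr hshape)

/-- If `ℛ₀ = (β/γ)(S₀ + ασR₀) > 1` then `R̂(0) = α < 1 < R̂(S₀)` and
there is a unique root of `R̂(S) = 1` in `(0, S₀)`. -/
theorem sirb_unique_root_R0_gt_one (β γ σ α S₀ R₀init : ℝ)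
    (hβ : 0 < β) (hγ : 0 < γ) (hσ : 0 < σ) (hα0 : 0 < α) (hα1 : α < 1)
    (hS₀ : 0 < S₀) (hR₀ : 0 ≤ R₀init)
    (r Rhat : ℝ → ℝ)
    (hr : ∀ S : ℝ, r S = γ / (σ * β) * (1 - (1 - σ * β / γ * R₀init) * (S / S₀) ^ σ))
    (hRhat : ∀ S : ℝ, Rhat S = β / γ * (S + α * σ * r S))
    (hR0gt : 1 < β / γ * (S₀ + α * σ * R₀init)) :
    Rhat 0 = α ∧ α < 1 ∧ 1 < Rhat S₀ ∧
      ∃! Sstar : ℝ, Sstar ∈ Set.Ioo 0 S₀ ∧ Rhat Sstar = 1 :=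
  sirb_unique_root_R0_gt_one_general β γ σ α S₀ R₀init hβ hγ hσ hα1 hS₀ r Rhat hr hRhat hR0gt
end

section
/- Let S, I, R, B : [0,∞) → ℝ be a solution of the SIRB system S' = −βSI, I' = βSI − γI + βσαIR, R' = γI − βσIR, B' = βσ(1−α)IR with β>0, γ>0, σ>0, 0<α<1, initial conditions S(0)>0, I(0)>0, R(0)≥0, B(0)≥0, S(0)+I(0)+R(0)+B(0)=1, and suppose S(t)>0 and I(t)>0 for all t≥0. If the basic reproduction number ℛ₀ := (β/γ)(S(0) + ασR(0)) satisfies ℛ₀ > 1, then there exists t_p > 0 such that I is monotonically increasing on (0, t_p) and monotonically decreasing on (t_p, ∞), and I(t) → 0 as t → ∞. -/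
/-!
With the cumulative incidence `u = ∫₀ᵗ I` as new time, `S` and `R` solve linear equations:
`S = S₀ e^{-βu}` and `R = R* + (R₀ - R*) e^{-βσu}` with `R* = γ/(βσ)`. Hence `I'/I = f(u)` for
`f(x) = βS₀ e^{-βx} + α(βσR₀ - γ) e^{-βσx} - (1-α)γ`, where `f(0) > 0` is exactly `ℛ₀ > 1` and
`f → -(1-α)γ < 0`. The derivative of `e^{βx} f(x)` is a positive factor times a decreasing one, so
`f` changes sign exactly once, at some `xs`. As `u` increases strictly, `I` grows until `u` reaches
`xs` (it must, or `u` would grow linearly) and decreases afterwards. Finally, if `I` stayed above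
some `ε > 0` then `u → ∞`, so `I' ≤ -cε` eventually, contradicting `I > 0`.
-/

open Set Filter Topology Real

section Calculus

variable {f f' : ℝ → ℝ}

theorem strictMonoOn_of_hasDerivAt_pos {D : Set ℝ} (hD : Convex ℝ D)
    (hf : ∀ x ∈ D, HasDerivAt f (f' x) x) (hf' : ∀ x ∈ interior D, 0 < f' x) :
    StrictMonoOn f D :=
  strictMonoOn_of_hasDerivWithinAt_pos hD (fun x hx ↦ (hf x hx).continuousAt.continuousWithinAt)
    (fun x hx ↦ (hf x (interior_subset hx)).hasDerivWithinAt) hf'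

theorem strictAntiOn_of_hasDerivAt_neg {D : Set ℝ} (hD : Convex ℝ D)
    (hf : ∀ x ∈ D, HasDerivAt f (f' x) x) (hf' : ∀ x ∈ interior D, f' x < 0) :
    StrictAntiOn f D :=
  strictAntiOn_of_hasDerivWithinAt_neg hD (fun x hx ↦ (hf x hx).continuousAt.continuousWithinAt)
    (fun x hx ↦ (hf x (interior_subset hx)).hasDerivWithinAt) hf'

theorem monotoneOn_of_hasDerivAt_nonneg {D : Set ℝ} (hD : Convex ℝ D)
    (hf : ∀ x ∈ D, HasDerivAt f (f' x) x) (hf' : ∀ x ∈ interior D, 0 ≤ f' x) :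
    MonotoneOn f D :=
  monotoneOn_of_hasDerivWithinAt_nonneg hD (fun x hx ↦ (hf x hx).continuousAt.continuousWithinAt)
    (fun x hx ↦ (hf x (interior_subset hx)).hasDerivWithinAt) hf'

theorem mul_sub_le_sub_of_hasDerivAt_Ici {a C : ℝ} (hf : ∀ x ∈ Ici a, HasDerivAt f (f' x) x)
    (hC : ∀ x ∈ Ici a, C ≤ f' x) {x : ℝ} (hx : a ≤ x) : C * (x - a) ≤ f x - f a :=
  (convex_Ici a).mul_sub_le_image_sub_of_le_deriv
    (fun y hy ↦ (hf y hy).continuousAt.continuousWithinAt)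
    (fun y hy ↦ (hf y (interior_subset hy)).differentiableAt.differentiableWithinAt)
    (fun y hy ↦ (hf y (interior_subset hy)).deriv ▸ hC y (interior_subset hy))
    a self_mem_Ici x hx hx

theorem tendsto_atTop_of_hasDerivAt_Ici {a C : ℝ} (hC : 0 < C)
    (hf : ∀ x ∈ Ici a, HasDerivAt f (f' x) x) (hCf : ∀ x ∈ Ici a, C ≤ f' x) :
    Tendsto f atTop atTop := by
  have hlin : Tendsto (fun x ↦ f a + C * (x - a)) atTop atTop :=
    tendsto_atTop_add_const_left _ _
      ((tendsto_atTop_add_const_right _ _ tendsto_id).const_mul_atTop hC)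
  refine tendsto_atTop_mono' _ ?_ hlin
  filter_upwards [eventually_ge_atTop a] with x hx
  linarith [mul_sub_le_sub_of_hasDerivAt_Ici hf hCf hx]

theorem eq_add_mul_exp_of_hasDerivAt {u x v : ℝ → ℝ} {a k c : ℝ}
    (hu : ∀ t ∈ Ici a, HasDerivAt u (v t) t)
    (hx : ∀ t ∈ Ici a, HasDerivAt x (k * v t * (c - x t)) t) {t : ℝ} (ht : a ≤ t) :
    x t = c + (x a - c) * exp (-(k * (u t - u a))) := by
  have hconst : ∀ s ∈ Icc a t, (x s - c) * exp (k * u s) = (x a - c) * exp (k * u a) := by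
    refine constant_of_has_deriv_right_zero (fun s hs ↦ ?_) (fun s hs ↦ ?_)
    · exact (((hx s hs.1).sub_const c).mul ((hu s hs.1).const_mul k).exp).continuousAt
        |>.continuousWithinAt
    · exact ((((hx s hs.1).sub_const c).mul ((hu s hs.1).const_mul k).exp).congr_deriv
        (by ring)).hasDerivWithinAt
  have h := hconst t ⟨ht, le_rfl⟩
  rw [mul_sub, neg_sub, exp_sub]
  field_simp
  linarith

end Calculus

theorem exists_sign_change_of_hasDerivAt {G G' : ℝ → ℝ} (hG : ∀ x, HasDerivAt G (G' x) x)
    (hG' : ∀ x y, x < y → G' x ≤ 0 → G' y < 0) (h0 : 0 < G 0)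
    (htop : ∀ᶠ x in atTop, G x < 0) :
    ∃ xs, 0 < xs ∧ (∀ x ∈ Ico 0 xs, 0 < G x) ∧ ∀ x ∈ Ioi xs, G x < 0 := by
  have hcont : Continuous G := continuous_iff_continuousAt.2 fun x ↦ (hG x).continuousAt
  -- Between `0` and a point where `G ≤ 0` the slope of `G` is negative somewhere, and then `G'`
  -- stays negative from there on.
  have hstay : ∀ x y, 0 ≤ x → x < y → G x ≤ 0 → G y < 0 := by
    intro x y hx hxy hGx
    have hx0 : 0 < x := hx.lt_of_ne (by rintro rfl; linarith)
    obtain ⟨ξ, hξ, hξslope⟩ :=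
      exists_hasDerivAt_eq_slope G G' hx0 hcont.continuousOn fun z _ ↦ hG z
    obtain ⟨η, hη, hηslope⟩ :=
      exists_hasDerivAt_eq_slope G G' hxy hcont.continuousOn fun z _ ↦ hG z
    have hξneg : G' ξ ≤ 0 := hξslope ▸ div_nonpos_of_nonpos_of_nonneg (by linarith) (by linarith)
    have hηneg : (G y - G x) / (y - x) < 0 := hηslope ▸ hG' ξ η (hξ.2.trans hη.1) hξneg
    linarith [(div_lt_iff₀ (sub_pos.2 hxy)).1 hηneg]
  obtain ⟨X, hX, hX0⟩ := (htop.and (eventually_gt_atTop 0)).exists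
  obtain ⟨xs, hxs, hGxs⟩ := intermediate_value_Ioo' hX0.le hcont.continuousOn ⟨hX, h0⟩
  refine ⟨xs, hxs.1, fun x hx ↦ ?_, fun x hx ↦ hstay xs x hxs.1.le hx hGxs.le⟩
  by_contra! h
  exact (hstay x xs hx.1 hx.2 h).ne hGxs

noncomputable def expGrowthRate (a b c d K x : ℝ) : ℝ :=
  a * exp (-(b * x)) + c * exp (-(d * x)) - K

theorem tendsto_expGrowthRate {a b c d K : ℝ} (hb : 0 < b) (hd : 0 < d) :
    Tendsto (expGrowthRate a b c d K) atTop (𝓝 (-K)) := by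
  have hexp : ∀ {r : ℝ}, 0 < r → Tendsto (fun x ↦ exp (-(r * x))) atTop (𝓝 0) := fun hr ↦
    tendsto_exp_neg_atTop_nhds_zero.comp (tendsto_id.const_mul_atTop hr)
  have h := (((hexp hb).const_mul a).add ((hexp hd).const_mul c)).sub_const K
  simp only [mul_zero, add_zero, zero_sub] at h
  exact h

theorem exists_sign_change_expGrowthRate {a b c d K : ℝ} (hb : 0 < b) (hd : 0 < d) (hK : 0 < K)
    (h0 : K < a + c) :
    ∃ xs, 0 < xs ∧ (∀ x ∈ Ico 0 xs, 0 < expGrowthRate a b c d K x) ∧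
      ∀ x ∈ Ioi xs, expGrowthRate a b c d K x < 0 := by
  -- `G = exp (b x) * expGrowthRate`, whose derivative is a positive factor times a strictly
  -- decreasing one.
  set G : ℝ → ℝ := fun x ↦ a + c * exp ((b - d) * x) - K * exp (b * x)
  have hfG : ∀ x, expGrowthRate a b c d K x = exp (-(b * x)) * G x := fun x ↦ by
    simp only [expGrowthRate, G, mul_sub, mul_add, mul_left_comm (exp _), ← exp_add]
    ring_nf
    simp
  set G' : ℝ → ℝ := fun x ↦ exp ((b - d) * x) * (c * (b - d) - K * b * exp (d * x))
  have hG : ∀ x, HasDerivAt G (G' x) x := fun x ↦ by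
    have h1 := (((hasDerivAt_id x).const_mul (b - d)).exp.const_mul c).const_add a
    have h2 := ((hasDerivAt_id x).const_mul b).exp.const_mul K
    refine (h1.sub h2).congr_deriv ?_
    simp only [G', id, mul_one]
    rw [show b * x = (b - d) * x + d * x by ring, exp_add]
    ring
  have hG' : ∀ x y, x < y → G' x ≤ 0 → G' y < 0 := fun x y hxy hx ↦ by
    have hxd : c * (b - d) ≤ K * b * exp (d * x) :=
      sub_nonpos.1 (nonpos_of_mul_nonpos_right hx (exp_pos _))
    have hexp : exp (d * x) < exp (d * y) := exp_lt_exp.2 (mul_lt_mul_of_pos_left hxy hd)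
    exact mul_neg_of_pos_of_neg (exp_pos _) (by nlinarith [mul_pos hK hb])
  have htop : ∀ᶠ x in atTop, G x < 0 := by
    filter_upwards [(tendsto_expGrowthRate hb hd).eventually (gt_mem_nhds (neg_neg_of_pos hK))]
      with x hx
    rw [hfG] at hx
    exact neg_of_mul_neg_right hx (exp_pos _).le
  obtain ⟨xs, hxs, hpos, hneg⟩ :=
    exists_sign_change_of_hasDerivAt hG hG' (by simpa [G] using sub_pos.2 h0) htop
  refine ⟨xs, hxs, fun x hx ↦ ?_, fun x hx ↦ ?_⟩
  · rw [hfG]; exact mul_pos (exp_pos _) (hpos x hx)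
  · rw [hfG]; exact mul_neg_of_pos_of_neg (exp_pos _) (hneg x hx)

section Peak

variable {I u g : ℝ → ℝ}

theorem tendsto_zero_of_hasDerivAt_mul_comp {a L : ℝ} (hL : L < 0)
    (hu : ∀ t ∈ Ici a, HasDerivAt u (I t) t) (hI : ∀ t ∈ Ici a, HasDerivAt I (I t * g (u t)) t)
    (hpos : ∀ t ∈ Ici a, 0 < I t) (hanti : AntitoneOn I (Ici a)) (hg : Tendsto g atTop (𝓝 L)) :
    Tendsto I atTop (𝓝 0) := by
  refine tendsto_order.2 ⟨fun ε hε ↦ ?_, fun ε hε ↦ ?_⟩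
  · filter_upwards [eventually_ge_atTop a] with t ht using hε.trans (hpos t ht)
  by_contra hnot
  have hge : ∀ t ∈ Ici a, ε ≤ I t := fun t ht ↦ by
    by_contra! hlt
    exact hnot (eventually_atTop.2 ⟨t, fun s hs ↦ (hanti ht (le_trans ht hs) hs).trans_lt hlt⟩)
  -- If `I` stayed above `ε`, then `u → ∞`, so eventually `g ∘ u < L / 2` and `I` would decrease
  -- at least linearly.
  have hgu : ∀ᶠ t in atTop, g (u t) < L / 2 :=
    (hg.comp (tendsto_atTop_of_hasDerivAt_Ici hε hu hge)).eventually (gt_mem_nhds (by linarith))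
  obtain ⟨T, hT⟩ := eventually_atTop.1 hgu
  have hdecay : Tendsto (fun t ↦ -I t) atTop atTop := by
    refine tendsto_atTop_of_hasDerivAt_Ici (a := max a T) (C := ε * (-L / 2))
      (mul_pos hε (by linarith))
      (fun t ht ↦ (hI t (le_of_max_le_left ht : a ≤ t)).neg) fun t ht ↦ ?_
    have h1 := hge t (le_of_max_le_left ht : a ≤ t)
    have h2 := hT t (le_of_max_le_right ht)
    nlinarith
  obtain ⟨t, ht, hta⟩ := ((hdecay.eventually_gt_atTop 0).and (eventually_ge_atTop a)).exists
  linarith [hpos t hta]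

theorem exists_peak_of_hasDerivAt_mul_comp {xs L : ℝ}
    (hu : ∀ t ∈ Ici 0, HasDerivAt u (I t) t) (hu0 : u 0 = 0)
    (hI : ∀ t ∈ Ici 0, HasDerivAt I (I t * g (u t)) t) (hpos : ∀ t ∈ Ici 0, 0 < I t)
    (hxs : 0 < xs) (hg_pos : ∀ x ∈ Ico 0 xs, 0 < g x) (hg_neg : ∀ x ∈ Ioi xs, g x < 0)
    (hL : L < 0) (hg : Tendsto g atTop (𝓝 L)) :
    ∃ tp, 0 < tp ∧ StrictMonoOn I (Ioo 0 tp) ∧ StrictAntiOn I (Ioi tp) ∧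
      Tendsto I atTop (𝓝 0) := by
  have hu_mono : StrictMonoOn u (Ici 0) :=
    strictMonoOn_of_hasDerivAt_pos (convex_Ici 0) hu fun t ht ↦ hpos t (interior_subset ht)
  have hu_nonneg : ∀ t ∈ Ici 0, 0 ≤ u t := fun t ht ↦
    hu0 ▸ hu_mono.monotoneOn self_mem_Ici ht ht
  -- While `u < xs` the function `I` grows, which forces `u` past `xs`.
  obtain ⟨T, hT, hxsT⟩ : ∃ T ∈ Ici (0 : ℝ), xs ≤ u T := by
    by_contra! hbelow
    have hI_mono : MonotoneOn I (Ici 0) :=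
      monotoneOn_of_hasDerivAt_nonneg (convex_Ici 0) hI fun t ht ↦
        have ht := interior_subset ht
        (mul_pos (hpos t ht) (hg_pos _ ⟨hu_nonneg t ht, hbelow t ht⟩)).le
    obtain ⟨t, hxst, ht⟩ := ((tendsto_atTop_of_hasDerivAt_Ici (hpos 0 self_mem_Ici) hu
      fun t ht ↦ hI_mono self_mem_Ici ht ht).eventually_ge_atTop xs).and
        (eventually_ge_atTop 0) |>.exists
    exact (hbelow t ht).not_ge hxst
  obtain ⟨tp, htp, hutp⟩ := intermediate_value_Ioc hT
    (fun t ht ↦ (hu t ht.1).continuousAt.continuousWithinAt) ⟨by rwa [hu0], hxsT⟩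
  have hanti : StrictAntiOn I (Ici tp) := by
    refine strictAntiOn_of_hasDerivAt_neg (convex_Ici tp) (fun t ht ↦ hI t (htp.1.le.trans ht))
      fun t ht ↦ ?_
    rw [interior_Ici] at ht
    have ht0 : 0 ≤ t := htp.1.le.trans ht.le
    exact mul_neg_of_pos_of_neg (hpos t ht0)
      (hg_neg _ (hutp ▸ hu_mono htp.1.le ht0 ht))
  have hmono : StrictMonoOn I (Ioo 0 tp) := by
    refine strictMonoOn_of_hasDerivAt_pos (convex_Ioo 0 tp) (fun t ht ↦ hI t ht.1.le)
      fun t ht ↦ ?_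
    rw [interior_Ioo] at ht
    exact mul_pos (hpos t ht.1.le)
      (hg_pos _ ⟨hu_nonneg t ht.1.le, hutp ▸ hu_mono ht.1.le htp.1.le ht.2⟩)
  refine ⟨tp, htp.1, hmono, hanti.mono Ioi_subset_Ici_self, ?_⟩
  exact tendsto_zero_of_hasDerivAt_mul_comp hL (fun t ht ↦ hu t (htp.1.le.trans ht))
    (fun t ht ↦ hI t (htp.1.le.trans ht)) (fun t ht ↦ hpos t (htp.1.le.trans ht))
    hanti.antitoneOn hg

end Peak

theorem sirb_one_peak_of_R0_gt_one_general (β γ σ α : ℝ) (S I R : ℝ → ℝ)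
    (hβ : 0 < β) (hγ : 0 < γ) (hσ : 0 < σ) (hα1 : α < 1)
    (hS' : ∀ t : ℝ, 0 ≤ t → HasDerivAt S (-(β * S t * I t)) t)
    (hI' : ∀ t : ℝ, 0 ≤ t → HasDerivAt I (β * S t * I t - γ * I t + β * σ * α * I t * R t) t)
    (hR' : ∀ t : ℝ, 0 ≤ t → HasDerivAt R (γ * I t - β * σ * I t * R t) t)
    (hSpos : ∀ t : ℝ, 0 ≤ t → 0 < S t) (hIpos : ∀ t : ℝ, 0 ≤ t → 0 < I t)
    (hR0gt : 1 < β / γ * (S 0 + α * σ * R 0)) :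
    ∃ tp : ℝ, 0 < tp ∧ StrictMonoOn I (Set.Ioo 0 tp) ∧ StrictAntiOn I (Set.Ioi tp) ∧
      Filter.Tendsto I Filter.atTop (nhds 0) := by
  -- `u = ∫₀ᵗ I`, read off from `(log S)' = -β I`.
  set u : ℝ → ℝ := fun t ↦ (log (S 0) - log (S t)) / β
  have hu : ∀ t ∈ Ici 0, HasDerivAt u (I t) t := fun t ht ↦
    ((((hS' t ht).log (hSpos t ht).ne').const_sub _).div_const β).congr_deriv
      (by field_simp [(hSpos t ht).ne'])
  have hu0 : u 0 = 0 := by simp [u]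
  have hS : ∀ t ∈ Ici 0, S t = S 0 * exp (-(β * u t)) := fun t ht ↦ by
    simpa [hu0] using eq_add_mul_exp_of_hasDerivAt (k := β) (c := 0) hu
      (fun s hs ↦ (hS' s hs).congr_deriv (by ring)) ht
  have hR : ∀ t ∈ Ici 0, R t = γ / (β * σ) + (R 0 - γ / (β * σ)) * exp (-(β * σ * u t)) :=
    fun t ht ↦ by
      simpa [hu0] using eq_add_mul_exp_of_hasDerivAt (k := β * σ) (c := γ / (β * σ)) hu
        (fun s hs ↦ (hR' s hs).congr_deriv (by field_simp)) ht
  have hI : ∀ t ∈ Ici 0, HasDerivAt I (I t * expGrowthRate (β * S 0) β (α * (β * σ * R 0 - γ))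
      (β * σ) ((1 - α) * γ) (u t)) t := fun t ht ↦
    (hI' t ht).congr_deriv (by rw [hS t ht, hR t ht, expGrowthRate]; field_simp; ring)
  have hK : 0 < (1 - α) * γ := mul_pos (sub_pos.2 hα1) hγ
  have h0 : (1 - α) * γ < β * S 0 + α * (β * σ * R 0 - γ) := by
    rw [div_mul_eq_mul_div, one_lt_div hγ] at hR0gt
    linarith
  obtain ⟨xs, hxs, hpos, hneg⟩ := exists_sign_change_expGrowthRate hβ (mul_pos hβ hσ) hK h0
  exact exists_peak_of_hasDerivAt_mul_comp hu hu0 hI hIpos hxs hpos hneg (neg_neg_of_pos hK)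
    (tendsto_expGrowthRate hβ (mul_pos hβ hσ))

/-- If `ℛ₀ = (β/γ)(S(0) + ασR(0)) > 1` then there is `t_p > 0` such that
`I` is monotonically increasing on `(0,t_p)`, monotonically decreasing on `(t_p,∞)`,
and `I(t) → 0` as `t → ∞`. -/
theorem sirb_one_peak_of_R0_gt_one (β γ σ α : ℝ) (S I R B : ℝ → ℝ)
    (hβ : 0 < β) (hγ : 0 < γ) (hσ : 0 < σ) (hα0 : 0 < α) (hα1 : α < 1)
    (hS' : ∀ t : ℝ, 0 ≤ t → HasDerivAt S (-(β * S t * I t)) t)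
    (hI' : ∀ t : ℝ, 0 ≤ t → HasDerivAt I (β * S t * I t - γ * I t + β * σ * α * I t * R t) t)
    (hR' : ∀ t : ℝ, 0 ≤ t → HasDerivAt R (γ * I t - β * σ * I t * R t) t)
    (hB' : ∀ t : ℝ, 0 ≤ t → HasDerivAt B (β * σ * (1 - α) * I t * R t) t)
    (hS0 : 0 < S 0) (hI0 : 0 < I 0) (hR0 : 0 ≤ R 0) (hB0 : 0 ≤ B 0)
    (hsum : S 0 + I 0 + R 0 + B 0 = 1)
    (hSpos : ∀ t : ℝ, 0 ≤ t → 0 < S t) (hIpos : ∀ t : ℝ, 0 ≤ t → 0 < I t)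
    (hR0gt : 1 < β / γ * (S 0 + α * σ * R 0)) :
    ∃ tp : ℝ, 0 < tp ∧ StrictMonoOn I (Set.Ioo 0 tp) ∧ StrictAntiOn I (Set.Ioi tp) ∧
      Filter.Tendsto I Filter.atTop (nhds 0) :=
  sirb_one_peak_of_R0_gt_one_general β γ σ α S I R hβ hγ hσ hα1 hS' hI' hR' hSpos hIpos hR0gt
end

section
/- Let β>0, γ>0, 0<σ≤1, 0<α<1, S₀>0, R₀ᵢₙᵢₜ≥0, define r(S) := (γ/(σβ))·(1 − (1 − (σβ/γ)·R₀ᵢₙᵢₜ)·(S/S₀)^σ) and R̂(S) := (β/γ)·(S + ασ·r(S)) for 0≤S≤S₀. If R̂(S₀) = (β/γ)·(S₀ + ασR₀ᵢₙᵢₜ) ≤ 1, then R̂(S) ≤ 1 for all 0 ≤ S ≤ S₀. -/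
/-!
Put `x = S / S₀ ∈ [0, 1]` and `y = x ^ σ`. Then `R̂(S)` differs from the convex combination
`(1 - y) α + y ℛ₀` only by `(β/γ) S₀ (x - y)`, which is `≤ 0` because `x ≤ x ^ σ` when `σ ≤ 1`.
Both `α` and `ℛ₀` are at most `1`, hence so is `R̂(S)`.
-/

lemma sirb_Rhat_le_convexComb {β γ σ α S₀ R₀init x y : ℝ}
    (hβ : 0 < β) (hγ : 0 < γ) (hσ : σ ≠ 0) (hS₀ : 0 ≤ S₀) (hxy : x ≤ y) :
    β / γ * (S₀ * x + α * σ * (γ / (σ * β) * (1 - (1 - σ * β / γ * R₀init) * y))) ≤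
      (1 - y) * α + y * (β / γ * (S₀ + α * σ * R₀init)) := by
  have hgap : (1 - y) * α + y * (β / γ * (S₀ + α * σ * R₀init)) -
      β / γ * (S₀ * x + α * σ * (γ / (σ * β) * (1 - (1 - σ * β / γ * R₀init) * y))) =
      β / γ * S₀ * (y - x) := by
    field_simp
    ring
  have : 0 ≤ β / γ * S₀ * (y - x) := by
    have := sub_nonneg.2 hxy
    positivity
  linarith

theorem sirb_Rhat_le_one_sigma_le_one_general (β γ σ α S₀ R₀init : ℝ)
    (hβ : 0 < β) (hγ : 0 < γ) (hσ : 0 < σ) (hσ1 : σ ≤ 1) (hα1 : α < 1)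
    (hS₀ : 0 < S₀)
    (r Rhat : ℝ → ℝ)
    (hr : ∀ S : ℝ, r S = γ / (σ * β) * (1 - (1 - σ * β / γ * R₀init) * (S / S₀) ^ σ))
    (hRhat : ∀ S : ℝ, Rhat S = β / γ * (S + α * σ * r S))
    (hR0le : β / γ * (S₀ + α * σ * R₀init) ≤ 1) :
    ∀ S : ℝ, 0 ≤ S → S ≤ S₀ → Rhat S ≤ 1 := by
  intro S hS hSS₀
  have hx0 : 0 ≤ S / S₀ := div_nonneg hS hS₀.le
  have hx1 : S / S₀ ≤ 1 := (div_le_one hS₀).2 hSS₀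
  have hy0 : 0 ≤ (S / S₀) ^ σ := Real.rpow_nonneg hx0 σ
  have hy1 : (S / S₀) ^ σ ≤ 1 := Real.rpow_le_one hx0 hx1 hσ.le
  calc Rhat S
      = β / γ * (S₀ * (S / S₀) + α * σ *
          (γ / (σ * β) * (1 - (1 - σ * β / γ * R₀init) * (S / S₀) ^ σ))) := by
        rw [hRhat, hr, mul_div_cancel₀ S hS₀.ne']
    _ ≤ (1 - (S / S₀) ^ σ) * α + (S / S₀) ^ σ * (β / γ * (S₀ + α * σ * R₀init)) :=
        sirb_Rhat_le_convexComb hβ hγ hσ.ne' hS₀.le (Real.self_le_rpow_of_le_one hx0 hx1 hσ1)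
    _ ≤ 1 := convex_Iic (1 : ℝ) hα1.le hR0le (sub_nonneg.2 hy1) hy0 (by ring)

/-- For `0 < σ ≤ 1`, if `ℛ₀ = (β/γ)(S₀ + ασR₀) ≤ 1` then `R̂(S) ≤ 1`
for all `0 ≤ S ≤ S₀`. -/
theorem sirb_Rhat_le_one_sigma_le_one (β γ σ α S₀ R₀init : ℝ)
    (hβ : 0 < β) (hγ : 0 < γ) (hσ : 0 < σ) (hσ1 : σ ≤ 1) (hα0 : 0 < α) (hα1 : α < 1)
    (hS₀ : 0 < S₀) (hR₀ : 0 ≤ R₀init)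
    (r Rhat : ℝ → ℝ)
    (hr : ∀ S : ℝ, r S = γ / (σ * β) * (1 - (1 - σ * β / γ * R₀init) * (S / S₀) ^ σ))
    (hRhat : ∀ S : ℝ, Rhat S = β / γ * (S + α * σ * r S))
    (hR0le : β / γ * (S₀ + α * σ * R₀init) ≤ 1) :
    ∀ S : ℝ, 0 ≤ S → S ≤ S₀ → Rhat S ≤ 1 :=
  sirb_Rhat_le_one_sigma_le_one_general β γ σ α S₀ R₀init hβ hγ hσ hσ1 hα1 hS₀ r Rhat hr hRhat hR0le
end

section
/- Let S, I, R, B : [0,∞) → ℝ be a solution of the SIRB system S' = −βSI, I' = βSI − γI + βσαIR, R' = γI − βσIR, B' = βσ(1−α)IR with β>0, γ>0, 0<σ≤1, 0<α<1, initial conditions S(0)>0, I(0)>0, R(0)≥0, B(0)≥0, S(0)+I(0)+R(0)+B(0)=1, and suppose S(t)>0 and I(t)>0 for all t≥0. If the basic reproduction number ℛ₀ := (β/γ)(S(0) + ασR(0)) satisfies ℛ₀ ≤ 1, then I is monotonically decreasing on [0,∞) and I(t) → 0 as t → ∞. -/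
open Set Filter Real

private lemma sirb_mono_aux {a : ℝ} {F F' : ℝ → ℝ} (h : ∀ t : ℝ, a ≤ t → HasDerivAt F (F' t) t)
    (h0 : ∀ t : ℝ, a < t → 0 ≤ F' t) : MonotoneOn F (Set.Ici a) := by
  apply monotoneOn_of_hasDerivWithinAt_nonneg (convex_Ici a)
    (fun t ht => (h t ht).continuousAt.continuousWithinAt) (f' := F')
  · intro x hx
    rw [interior_Ici] at hx
    exact (h x hx.le).hasDerivWithinAt
  · intro x hx
    rw [interior_Ici] at hx
    exact h0 x hx

private lemma sirb_anti_aux {a : ℝ} {F F' : ℝ → ℝ} (h : ∀ t : ℝ, a ≤ t → HasDerivAt F (F' t) t)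
    (h0 : ∀ t : ℝ, a < t → F' t ≤ 0) : AntitoneOn F (Set.Ici a) := by
  have := sirb_mono_aux (F := fun t => -F t) (F' := fun t => -F' t)
    (fun t ht => (h t ht).neg) (fun t ht => neg_nonneg.2 (h0 t ht))
  intro x hx y hy hxy
  simpa using this hx hy hxy

private lemma sirb_strictAnti_aux {a : ℝ} {F F' : ℝ → ℝ}
    (h : ∀ t : ℝ, a ≤ t → HasDerivAt F (F' t) t)
    (h0 : ∀ t : ℝ, a < t → F' t < 0) : StrictAntiOn F (Set.Ici a) := by
  apply strictAntiOn_of_hasDerivWithinAt_neg (convex_Ici a)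
    (fun t ht => (h t ht).continuousAt.continuousWithinAt) (f' := F')
  · intro x hx
    rw [interior_Ici] at hx
    exact (h x hx.le).hasDerivWithinAt
  · intro x hx
    rw [interior_Ici] at hx
    exact h0 x hx

private lemma sirb_strictMono_aux {a : ℝ} {F F' : ℝ → ℝ}
    (h : ∀ t : ℝ, a ≤ t → HasDerivAt F (F' t) t)
    (h0 : ∀ t : ℝ, a < t → 0 < F' t) : StrictMonoOn F (Set.Ici a) := by
  apply strictMonoOn_of_hasDerivWithinAt_pos (convex_Ici a)
    (fun t ht => (h t ht).continuousAt.continuousWithinAt) (f' := F')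
  · intro x hx
    rw [interior_Ici] at hx
    exact (h x hx.le).hasDerivWithinAt
  · intro x hx
    rw [interior_Ici] at hx
    exact h0 x hx

private lemma sirb_exp_deriv (c s : ℝ) :
    HasDerivAt (fun u : ℝ => Real.exp (c * u)) (Real.exp (c * s) * c) s := by
  simpa [mul_comm] using ((hasDerivAt_id s).const_mul c).exp

/-- For `0 < σ ≤ 1`, if `ℛ₀ = (β/γ)(S(0) + ασR(0)) ≤ 1` then `I` is
monotonically decreasing on `[0,∞)` and `I(t) → 0` as `t → ∞`. -/
theorem sirb_I_decreasing_sigma_le_one (β γ σ α : ℝ) (S I R B : ℝ → ℝ)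
    (hβ : 0 < β) (hγ : 0 < γ) (hσ : 0 < σ) (hα0 : 0 < α) (hα1 : α < 1)
    (hS' : ∀ t : ℝ, 0 ≤ t → HasDerivAt S (-(β * S t * I t)) t)
    (hI' : ∀ t : ℝ, 0 ≤ t → HasDerivAt I (β * S t * I t - γ * I t + β * σ * α * I t * R t) t)
    (hR' : ∀ t : ℝ, 0 ≤ t → HasDerivAt R (γ * I t - β * σ * I t * R t) t)
    (hB' : ∀ t : ℝ, 0 ≤ t → HasDerivAt B (β * σ * (1 - α) * I t * R t) t)
    (hS0 : 0 < S 0) (hI0 : 0 < I 0) (hR0 : 0 ≤ R 0) (hB0 : 0 ≤ B 0)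
    (hsum : S 0 + I 0 + R 0 + B 0 = 1)
    (hSpos : ∀ t : ℝ, 0 ≤ t → 0 < S t) (hIpos : ∀ t : ℝ, 0 ≤ t → 0 < I t)
    (hσ1 : σ ≤ 1)
    (hR0le : β / γ * (S 0 + α * σ * R 0) ≤ 1) :
    StrictAntiOn I (Set.Ici 0) ∧ Filter.Tendsto I Filter.atTop (nhds 0) := by
  have hασ : α * σ < 1 := by nlinarith
  -- the antiderivative of (a continuous extension of) I
  have contI : Continuous fun t : ℝ => I (max t 0) := by
    rw [continuous_iff_continuousAt]
    intro t
    have h1 : ContinuousAt (fun u : ℝ => max u 0) t :=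
      (continuous_id.max continuous_const).continuousAt
    exact ContinuousAt.comp (g := I) (f := fun u : ℝ => max u 0)
      ((hI' _ (le_max_right t 0)).continuousAt) h1
  set J : ℝ → ℝ := fun t => ∫ s in (0:ℝ)..t, I (max s 0) with hJdef
  have hJ : ∀ t : ℝ, 0 ≤ t → HasDerivAt J (I t) t := by
    intro t ht
    have := intervalIntegral.integral_hasDerivAt_right
      (contI.intervalIntegrable 0 t)
      (contI.stronglyMeasurableAtFilter _ _) contI.continuousAt
    rwa [max_eq_left ht] at this
  have hJ0 : J 0 = 0 := intervalIntegral.integral_same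
  have hexpJ : ∀ c t : ℝ, 0 ≤ t → HasDerivAt (fun u => Real.exp (c * J u))
      (Real.exp (c * J t) * (c * I t)) t := by
    intro c t ht
    simpa [mul_comm, mul_assoc, mul_left_comm] using (((hJ t ht).const_mul c).exp)
  -- R is nonnegative
  have hRnn : ∀ t : ℝ, 0 ≤ t → 0 ≤ R t := by
    intro t ht
    have key : MonotoneOn (fun t => R t * Real.exp (β * σ * J t)) (Set.Ici 0) := by
      apply sirb_mono_aux (F' := fun s => Real.exp (β * σ * J s) * (γ * I s))
      · intro s hs
        refine ((hR' s hs).mul (hexpJ (β * σ) s hs)).congr_deriv ?_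
        ring
      · intro s hs
        exact mul_nonneg (Real.exp_pos _).le (mul_nonneg hγ.le (hIpos s hs.le).le)
    have h0 := key Set.self_mem_Ici (Set.mem_Ici.2 ht) ht
    simp only [hJ0, mul_zero, Real.exp_zero, mul_one] at h0
    nlinarith [Real.exp_pos (β * σ * J t), mul_nonneg hR0 (Real.exp_pos (β * σ * J t)).le]
  -- the key quantity f = γ - βS - αβσR is positive for t > 0
  have hf' : ∀ t : ℝ, 0 ≤ t →
      HasDerivAt (fun u => γ - β * S u - α * β * σ * R u)
        (-(β * -(β * S t * I t)) - α * β * σ * (γ * I t - β * σ * I t * R t)) t := by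
    intro t ht
    exact (((hS' t ht).const_mul β).const_sub γ).sub ((hR' t ht).const_mul (α * β * σ))
  have hβγ : β * (S 0 + α * σ * R 0) ≤ γ := by
    rw [div_mul_eq_mul_div, div_le_one hγ] at hR0le
    exact hR0le
  have hf0 : 0 ≤ γ - β * S 0 - α * β * σ * R 0 := by nlinarith
  have hkey : StrictMonoOn
      (fun u => (γ - β * S u - α * β * σ * R u) * Real.exp (α * σ * β * J u))
      (Set.Ici 0) := by
    apply sirb_strictMono_aux (F' := fun s => Real.exp (α * σ * β * J s) *
      (I s * (β ^ 2 * S s * (1 - α * σ) + α * β ^ 2 * σ ^ 2 * R s * (1 - α))))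
    · intro s hs
      refine ((hf' s hs).mul (hexpJ (α * σ * β) s hs)).congr_deriv ?_
      ring
    · intro s hs
      refine mul_pos (Real.exp_pos _) (mul_pos (hIpos s hs.le) ?_)
      have h1 : 0 < β ^ 2 * S s * (1 - α * σ) :=
        mul_pos (mul_pos (by positivity) (hSpos s hs.le)) (by linarith)
      have h2 : 0 ≤ α * β ^ 2 * σ ^ 2 * R s * (1 - α) :=
        mul_nonneg (mul_nonneg (by positivity) (hRnn s hs.le)) (by linarith)
      linarith
  have hfstrict : ∀ t : ℝ, 0 < t → 0 < γ - β * S t - α * β * σ * R t := by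
    intro t ht
    have h0 := hkey Set.self_mem_Ici (Set.mem_Ici.2 ht.le) ht
    simp only [hJ0, mul_zero, Real.exp_zero, mul_one] at h0
    nlinarith [Real.exp_pos (α * σ * β * J t),
      mul_nonneg hf0 (Real.exp_pos (α * σ * β * J t)).le]
  -- Part 1 : I is strictly decreasing
  have hIanti : StrictAntiOn I (Set.Ici 0) := by
    apply sirb_strictAnti_aux hI'
    intro t ht
    nlinarith [mul_pos (hIpos t ht.le) (hfstrict t ht)]
  refine ⟨hIanti, ?_⟩
  -- Part 2 : I tends to 0
  have key : ∀ ε : ℝ, 0 < ε → ∃ t₀ : ℝ, 0 ≤ t₀ ∧ I t₀ < ε := by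
    intro ε hε
    by_contra hcon
    push_neg at hcon
    have hIge : ∀ t : ℝ, 0 ≤ t → ε ≤ I t := hcon
    -- S decays exponentially
    have hSdec : ∀ t : ℝ, 0 ≤ t → S t ≤ S 0 * Real.exp (-(β * ε * t)) := by
      intro t ht
      have key2 : AntitoneOn (fun u => S u * Real.exp (β * ε * u)) (Set.Ici 0) := by
        apply sirb_anti_aux (F' := fun s =>
          -(β * S s * I s) * Real.exp (β * ε * s) + S s * (Real.exp (β * ε * s) * (β * ε)))
        · intro s _hs
          exact (hS' s _hs).mul (sirb_exp_deriv (β * ε) s)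
        · intro s hs
          have h1 : ε ≤ I s := hIge s hs.le
          have h2 : 0 < S s := hSpos s hs.le
          have h3 : (0:ℝ) < Real.exp (β * ε * s) := Real.exp_pos _
          nlinarith [mul_pos (mul_pos hβ h2) h3]
      have h0 := key2 Set.self_mem_Ici (Set.mem_Ici.2 ht) ht
      simp only [mul_zero, Real.exp_zero, mul_one] at h0
      have h3 : (0:ℝ) < Real.exp (β * ε * t) := Real.exp_pos _
      rw [Real.exp_neg, ← div_eq_mul_inv, le_div_iff₀ h3]
      exact h0
    -- J grows at least linearly
    have hJlb : ∀ t : ℝ, 0 ≤ t → ε * t ≤ J t := by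
      intro t ht
      have : ∫ _s in (0:ℝ)..t, ε ≤ ∫ s in (0:ℝ)..t, I (max s 0) := by
        apply intervalIntegral.integral_mono_on ht
          (intervalIntegrable_const) (contI.intervalIntegrable 0 t)
        intro x _
        exact hIge (max x 0) (le_max_right x 0)
      simpa [mul_comm] using this
    -- R converges to γ/(βσ)
    have hRconv : ∀ t : ℝ, 0 ≤ t →
        (γ / (β * σ) - R t) * Real.exp (β * σ * J t) = γ / (β * σ) - R 0 := by
      intro t ht
      have hd : ∀ s : ℝ, 0 ≤ s → HasDerivAt
          (fun u => (γ / (β * σ) - R u) * Real.exp (β * σ * J u)) 0 s := by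
        intro s hs
        refine (((hR' s hs).const_sub (γ / (β * σ))).mul (hexpJ (β * σ) s hs)).congr_deriv ?_
        field_simp
        ring
      have h1 := sirb_mono_aux (a := 0) hd (fun s _ => le_rfl)
        Set.self_mem_Ici (Set.mem_Ici.2 ht) ht
      have h2 := sirb_anti_aux (a := 0) hd (fun s _ => le_rfl)
        Set.self_mem_Ici (Set.mem_Ici.2 ht) ht
      simp only [hJ0, mul_zero, Real.exp_zero, mul_one] at h1 h2
      linarith
    have hRbound : ∀ t : ℝ, 0 ≤ t →
        |γ / (β * σ) - R t| ≤ |γ / (β * σ) - R 0| * Real.exp (-(β * σ * ε * t)) := by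
      intro t ht
      have h2 : (0:ℝ) < Real.exp (β * σ * J t) := Real.exp_pos _
      have h3 : γ / (β * σ) - R t = (γ / (β * σ) - R 0) * Real.exp (-(β * σ * J t)) := by
        rw [Real.exp_neg, eq_mul_inv_iff_mul_eq₀ h2.ne']
        exact hRconv t ht
      rw [h3, abs_mul, abs_of_pos (Real.exp_pos _)]
      refine mul_le_mul_of_nonneg_left ?_ (abs_nonneg _)
      apply Real.exp_le_exp.2
      nlinarith [hJlb t ht, mul_le_mul_of_nonneg_left (hJlb t ht) (by positivity : (0:ℝ) ≤ β * σ)]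
    -- choose T beyond which f := γ - βS - αβσR is at least 2q
    obtain ⟨q, hqpos, hq4⟩ : ∃ q : ℝ, 0 < q ∧ γ * (1 - α) = 4 * q :=
      ⟨γ * (1 - α) / 4, by nlinarith, by ring⟩
    have decay : ∀ c k : ℝ, 0 < k →
        Tendsto (fun t : ℝ => c * Real.exp (-(k * t))) atTop (nhds 0) := by
      intro c k hk
      have h1 : Tendsto (fun t : ℝ => -(k * t)) atTop atBot := by
        apply Filter.tendsto_neg_atTop_atBot.comp
        exact Tendsto.const_mul_atTop hk tendsto_id
      have := Real.tendsto_exp_atBot.comp h1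
      simpa using this.const_mul c
    have ev1 : ∀ᶠ t : ℝ in atTop, β * (S 0 * Real.exp (-(β * ε * t))) < q := by
      have h2 := (decay (β * S 0) (β * ε) (by positivity)).eventually (gt_mem_nhds hqpos)
      filter_upwards [h2] with t ht
      calc β * (S 0 * Real.exp (-(β * ε * t))) = β * S 0 * Real.exp (-(β * ε * t)) := by ring
        _ < q := ht
    have ev2 : ∀ᶠ t : ℝ in atTop,
        α * β * σ * (|γ / (β * σ) - R 0| * Real.exp (-(β * σ * ε * t))) < q := by
      have h2 := (decay (α * β * σ * |γ / (β * σ) - R 0|) (β * σ * ε)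
        (by positivity)).eventually (gt_mem_nhds hqpos)
      filter_upwards [h2] with t ht
      calc α * β * σ * (|γ / (β * σ) - R 0| * Real.exp (-(β * σ * ε * t)))
          = α * β * σ * |γ / (β * σ) - R 0| * Real.exp (-(β * σ * ε * t)) := by ring
        _ < q := ht
    obtain ⟨T, hT⟩ := (ev1.and (ev2.and (eventually_ge_atTop (0:ℝ)))).exists_forall_of_atTop
    have hTnn : 0 ≤ T := (hT T le_rfl).2.2
    have hflb : ∀ t : ℝ, T ≤ t → 2 * q ≤ γ - β * S t - α * β * σ * R t := by
      intro t ht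
      have htnn : 0 ≤ t := le_trans hTnn ht
      obtain ⟨e1, e2, _⟩ := hT t ht
      have hS := hSdec t htnn
      have hR := hRbound t htnn
      have habs := (abs_le.1 hR).1
      have hβS : β * S t ≤ β * (S 0 * Real.exp (-(β * ε * t))) :=
        mul_le_mul_of_nonneg_left hS hβ.le
      have hfexpand : γ - β * S t - α * β * σ * R t
          = γ * (1 - α) - β * S t + α * β * σ * (γ / (β * σ) - R t) := by
        field_simp
        ring
      have h5 : -(α * β * σ * (|γ / (β * σ) - R 0| * Real.exp (-(β * σ * ε * t))))
          ≤ α * β * σ * (γ / (β * σ) - R t) := by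
        have h6 := mul_le_mul_of_nonneg_left habs (by positivity : (0:ℝ) ≤ α * β * σ)
        calc -(α * β * σ * (|γ / (β * σ) - R 0| * Real.exp (-(β * σ * ε * t))))
            = α * β * σ * -(|γ / (β * σ) - R 0| * Real.exp (-(β * σ * ε * t))) := by ring
          _ ≤ α * β * σ * (γ / (β * σ) - R t) := h6
      rw [hfexpand]
      linarith
    -- derive a contradiction : I becomes negative
    obtain ⟨δ, hδpos, hδ⟩ : ∃ δ : ℝ, 0 < δ ∧ δ = ε * q := ⟨ε * q, mul_pos hε hqpos, rfl⟩
    have hw : AntitoneOn (fun u => I u + δ * u) (Set.Ici T) := by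
      apply sirb_anti_aux (F' := fun s =>
        (β * S s * I s - γ * I s + β * σ * α * I s * R s) + δ)
      · intro s hs
        have hsnn : 0 ≤ s := le_trans hTnn hs
        exact (hI' s hsnn).add (((hasDerivAt_id s).const_mul δ).congr_deriv (mul_one δ))
      · intro s hs
        have hsnn : 0 ≤ s := le_trans hTnn hs.le
        have h1 := hIge s hsnn
        have h2 := hflb s hs.le
        have h3 : 0 ≤ γ - β * S s - α * β * σ * R s := by linarith
        have h4 : 2 * q * ε ≤ (γ - β * S s - α * β * σ * R s) * I s :=
          mul_le_mul h2 h1 hε.le h3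
        have h5 : (γ - β * S s - α * β * σ * R s) * I s
            = γ * I s - β * S s * I s - β * σ * α * I s * R s := by ring
        have h9 : 0 < q * ε := mul_pos hqpos hε
        linarith
    have hIT : 0 < I T := hIpos T hTnn
    have ht₁T : T ≤ T + (I T + 1) / δ := by
      have : 0 < (I T + 1) / δ := by positivity
      linarith
    have h6 := hw Set.self_mem_Ici (Set.mem_Ici.2 ht₁T) ht₁T
    have h7 : δ * (T + (I T + 1) / δ) = δ * T + (I T + 1) := by
      field_simp
    have h8 := hIpos (T + (I T + 1) / δ) (le_trans hTnn ht₁T)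
    simp only at h6
    linarith
  -- conclude the limit
  rw [tendsto_order]
  constructor
  · intro a ha
    filter_upwards [eventually_ge_atTop (0:ℝ)] with t ht
    exact lt_trans ha (hIpos t ht)
  · intro a ha
    obtain ⟨t₀, ht₀, hlt⟩ := key a ha
    filter_upwards [eventually_gt_atTop t₀] with t ht
    calc I t < I t₀ := hIanti (Set.mem_Ici.2 ht₀) (Set.mem_Ici.2 (le_trans ht₀ ht.le)) ht
      _ < a := hlt
end

section
/- Let β>0, γ>0, σ>1, 0<α<1, S₀>0, R₀ᵢₙᵢₜ≥0 with (σβ/γ)·R₀ᵢₙᵢₜ < 1, define r(S) := (γ/(σβ))·(1 − (1 − (σβ/γ)·R₀ᵢₙᵢₜ)·(S/S₀)^σ) and R̂(S) := (β/γ)·(S + ασ·r(S)) for 0≤S≤S₀, and assume R̂(S₀) ≤ 1. If (β/γ)·(S₀ + ασ²R₀ᵢₙᵢₜ) < ασ, then R̂ attains a strict global maximum on (0, S₀) at the unique point S̃ := ((β/γ)·S₀ / (σα·(1 − (σβ/γ)·R₀ᵢₙᵢₜ)))^(1/(σ−1)) · S₀, which satisfies 0 < S̃ < S₀; moreover R̂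 is strictly increasing on [0, S̃] and strictly decreasing on [S̃, S₀]. -/
/-!
With `k = β/γ` and `c = 1 - (σβ/γ)R₀`, the reproduction function is
`R̂(S) = α + k S - α c (S/S₀)^σ`, an affine function minus a convex power. Its derivative
`k - α c σ (S/S₀)^(σ-1) / S₀` is strictly decreasing on `[0, ∞)` and vanishes exactly at `S̃`,
so `R̂` increases up to `S̃` and decreases after it. The hypothesis on `(β/γ)(S₀ + ασ²R₀)` says
precisely that `(S̃/S₀)^(σ-1) = k S₀ / (σ α c) < 1`, i.e. that `S̃ < S₀`.
-/

open Set

section AffineSubRpow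

variable {a k b p S₀ : ℝ}

theorem hasDerivAt_affine_sub_rpow (hp : 1 ≤ p) (x : ℝ) :
    HasDerivAt (fun S => a + k * S - b * (S / S₀) ^ p)
      (k - b * p * (x / S₀) ^ (p - 1) / S₀) x := by
  have hdiv : HasDerivAt (fun S : ℝ => S / S₀) (1 / S₀) x := by
    simpa using (hasDerivAt_id x).div_const S₀
  have hpow := (Real.hasDerivAt_rpow_const (x := x / S₀) (Or.inr hp)).comp x hdiv
  exact ((((hasDerivAt_id x).const_mul k).const_add a).sub (hpow.const_mul b)).congr_deriv
    (by ring)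

theorem differentiable_affine_sub_rpow (hp : 1 ≤ p) :
    Differentiable ℝ (fun S => a + k * S - b * (S / S₀) ^ p) :=
  fun x => (hasDerivAt_affine_sub_rpow hp x).differentiableAt

theorem deriv_affine_sub_rpow_eq (hp : 1 ≤ p) (hS₀ : S₀ ≠ 0) {m : ℝ}
    (hm : b * p * (m / S₀) ^ (p - 1) = k * S₀) (x : ℝ) :
    deriv (fun S => a + k * S - b * (S / S₀) ^ p) x =
      b * p / S₀ * ((m / S₀) ^ (p - 1) - (x / S₀) ^ (p - 1)) := by
  rw [(hasDerivAt_affine_sub_rpow hp x).deriv]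
  field_simp
  linear_combination -hm

theorem strictMonoOn_affine_sub_rpow (hb : 0 < b) (hp : 1 < p) (hS₀ : 0 < S₀) {m : ℝ}
    (hm : b * p * (m / S₀) ^ (p - 1) = k * S₀) :
    StrictMonoOn (fun S => a + k * S - b * (S / S₀) ^ p) (Icc 0 m) := by
  refine strictMonoOn_of_deriv_pos (convex_Icc 0 m)
    (differentiable_affine_sub_rpow hp.le).continuous.continuousOn fun x hx => ?_
  rw [interior_Icc] at hx
  rw [deriv_affine_sub_rpow_eq hp.le hS₀.ne' hm]
  have hxm : (x / S₀) ^ (p - 1) < (m / S₀) ^ (p - 1) :=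
    Real.rpow_lt_rpow (div_pos hx.1 hS₀).le (by gcongr; exact hx.2) (by linarith)
  exact mul_pos (by positivity) (sub_pos.2 hxm)

theorem strictAntiOn_affine_sub_rpow (hb : 0 < b) (hp : 1 < p) (hS₀ : 0 < S₀) {m : ℝ}
    (hm0 : 0 ≤ m) (hm : b * p * (m / S₀) ^ (p - 1) = k * S₀) :
    StrictAntiOn (fun S => a + k * S - b * (S / S₀) ^ p) (Ici m) := by
  refine strictAntiOn_of_deriv_neg (convex_Ici m)
    (differentiable_affine_sub_rpow hp.le).continuous.continuousOn fun x hx => ?_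
  rw [interior_Ici] at hx
  rw [deriv_affine_sub_rpow_eq hp.le hS₀.ne' hm]
  have hmx : (m / S₀) ^ (p - 1) < (x / S₀) ^ (p - 1) :=
    Real.rpow_lt_rpow (div_nonneg hm0 hS₀.le) (by gcongr; exact hx) (by linarith)
  exact mul_neg_of_pos_of_neg (by positivity) (sub_neg.2 hmx)

end AffineSubRpow

theorem lt_of_strictMonoOn_of_strictAntiOn {α β : Type*} [LinearOrder α] [Preorder β]
    {f : α → β} {a m b x : α}
    (hmono : StrictMonoOn f (Icc a m)) (hanti : StrictAntiOn f (Icc m b))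
    (ham : a ≤ m) (hmb : m ≤ b) (hx : x ∈ Icc a b) (hxm : x ≠ m) : f x < f m := by
  rcases hxm.lt_or_gt with h | h
  · exact hmono ⟨hx.1, h.le⟩ ⟨ham, le_rfl⟩ h
  · exact hanti ⟨le_rfl, hmb⟩ ⟨h.le, hx.2⟩ h

theorem sirb_Rhat_unique_max_general (β γ σ α S₀ R₀init : ℝ)
    (hβ : 0 < β) (hγ : 0 < γ) (hσ : 1 < σ) (hα0 : 0 < α)
    (hS₀ : 0 < S₀) (hR₀lt : σ * β / γ * R₀init < 1)
    (r Rhat : ℝ → ℝ)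
    (hr : ∀ S : ℝ, r S = γ / (σ * β) * (1 - (1 - σ * β / γ * R₀init) * (S / S₀) ^ σ))
    (hRhat : ∀ S : ℝ, Rhat S = β / γ * (S + α * σ * r S))
    (hcase : β / γ * (S₀ + α * σ ^ 2 * R₀init) < α * σ)
    (Stilde : ℝ)
    (hSt : Stilde = (β / γ * S₀ / (σ * α * (1 - σ * β / γ * R₀init))) ^ (1 / (σ - 1)) * S₀) :
    0 < Stilde ∧ Stilde < S₀ ∧
      (∀ S ∈ Set.Icc 0 S₀, S ≠ Stilde → Rhat S < Rhat Stilde) ∧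
      StrictMonoOn Rhat (Set.Icc 0 Stilde) ∧ StrictAntiOn Rhat (Set.Icc Stilde S₀) := by
  set c := 1 - σ * β / γ * R₀init
  have hc : 0 < c := sub_pos.2 hR₀lt
  have hRhat_eq : Rhat = fun S => α + β / γ * S - α * c * (S / S₀) ^ σ := by
    funext S
    rw [hRhat, hr]
    field_simp
    ring
  set A := β / γ * S₀ / (σ * α * c)
  have hA0 : 0 < A := by positivity
  have hA1 : A < 1 := by
    rw [div_lt_one (by positivity)]
    linear_combination hcase
  have hratio : (Stilde / S₀) ^ (σ - 1) = A := by
    rw [hSt, mul_div_cancel_right₀ _ hS₀.ne', one_div, Real.rpow_inv_rpow hA0.le (sub_pos.2 hσ).ne']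
  have hSt0 : 0 < Stilde := hSt ▸ by positivity
  have hStlt : Stilde < S₀ := by
    rw [hSt]
    exact mul_lt_of_lt_one_left hS₀ (Real.rpow_lt_one hA0.le hA1 (one_div_pos.2 (sub_pos.2 hσ)))
  have hcrit : α * c * σ * (Stilde / S₀) ^ (σ - 1) = β / γ * S₀ := by
    rw [hratio, mul_comm _ σ, ← mul_assoc, mul_div_cancel₀ _ (by positivity)]
  have hmono : StrictMonoOn Rhat (Icc 0 Stilde) :=
    hRhat_eq ▸ strictMonoOn_affine_sub_rpow (by positivity) hσ hS₀ hcrit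
  have hanti : StrictAntiOn Rhat (Icc Stilde S₀) :=
    hRhat_eq ▸ (strictAntiOn_affine_sub_rpow (by positivity) hσ hS₀ hSt0.le hcrit).mono
      Icc_subset_Ici_self
  exact ⟨hSt0, hStlt, fun S hS hne =>
    lt_of_strictMonoOn_of_strictAntiOn hmono hanti hSt0.le hStlt.le hS hne, hmono, hanti⟩

/-- For `σ > 1`, `ℛ₀ ≤ 1` and `(β/γ)(S₀ + ασ²R₀) < ασ`, the function `R̂`
attains a strict global maximum on `[0,S₀]` at the unique interior point `S̃`; moreover
`R̂` is strictly increasing on `[0,S̃]` and strictly decreasing on `[S̃,S₀]`. -/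
theorem sirb_Rhat_unique_max (β γ σ α S₀ R₀init : ℝ)
    (hβ : 0 < β) (hγ : 0 < γ) (hσ : 1 < σ) (hα0 : 0 < α) (hα1 : α < 1)
    (hS₀ : 0 < S₀) (hR₀ : 0 ≤ R₀init) (hR₀lt : σ * β / γ * R₀init < 1)
    (r Rhat : ℝ → ℝ)
    (hr : ∀ S : ℝ, r S = γ / (σ * β) * (1 - (1 - σ * β / γ * R₀init) * (S / S₀) ^ σ))
    (hRhat : ∀ S : ℝ, Rhat S = β / γ * (S + α * σ * r S))
    (hR0le : Rhat S₀ ≤ 1)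
    (hcase : β / γ * (S₀ + α * σ ^ 2 * R₀init) < α * σ)
    (Stilde : ℝ)
    (hSt : Stilde = (β / γ * S₀ / (σ * α * (1 - σ * β / γ * R₀init))) ^ (1 / (σ - 1)) * S₀) :
    0 < Stilde ∧ Stilde < S₀ ∧
      (∀ S ∈ Set.Icc 0 S₀, S ≠ Stilde → Rhat S < Rhat Stilde) ∧
      StrictMonoOn Rhat (Set.Icc 0 Stilde) ∧ StrictAntiOn Rhat (Set.Icc Stilde S₀) :=
  sirb_Rhat_unique_max_general β γ σ α S₀ R₀init hβ hγ hσ hα0 hS₀ hR₀lt r Rhat hr hRhat hcase Stilde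
    hSt
end

section
/- Let β>0, γ>0, σ>1, 0<α<1, S₀>0, R₀ᵢₙᵢₜ≥0 with (σβ/γ)·R₀ᵢₙᵢₜ < 1, define r(S) := (γ/(σβ))·(1 − (1 − (σβ/γ)·R₀ᵢₙᵢₜ)·(S/S₀)^σ) and R̂(S) := (β/γ)·(S + ασ·r(S)) for 0≤S≤S₀. Assume R̂(S₀) ≤ 1, (β/γ)·(S₀ + ασ²R₀ᵢₙᵢₜ) < ασ, and R̂(S̃) ≤ 1 where S̃ := ((β/γ)·S₀ / (σα·(1 − (σβ/γ)·R₀ᵢₙᵢₜ)))^(1/(σ−1)) · S₀. Then R̂(S) ≤ 1 for all 0 ≤ S ≤ S₀. -/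
/-- For `σ > 1`, `ℛ₀ ≤ 1`, `(β/γ)(S₀ + ασ²R₀) < ασ` and `R̂(S̃) ≤ 1`,
one has `R̂(S) ≤ 1` for all `0 ≤ S ≤ S₀`. -/
theorem sirb_Rhat_le_one_sigma_gt_one_case2 (β γ σ α S₀ R₀init : ℝ)
    (hβ : 0 < β) (hγ : 0 < γ) (hσ : 1 < σ) (hα0 : 0 < α) (hα1 : α < 1)
    (hS₀ : 0 < S₀) (hR₀ : 0 ≤ R₀init) (hR₀lt : σ * β / γ * R₀init < 1)
    (r Rhat : ℝ → ℝ)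
    (hr : ∀ S : ℝ, r S = γ / (σ * β) * (1 - (1 - σ * β / γ * R₀init) * (S / S₀) ^ σ))
    (hRhat : ∀ S : ℝ, Rhat S = β / γ * (S + α * σ * r S))
    (hR0le : Rhat S₀ ≤ 1)
    (hcase : β / γ * (S₀ + α * σ ^ 2 * R₀init) < α * σ)
    (Stilde : ℝ)
    (hSt : Stilde = (β / γ * S₀ / (σ * α * (1 - σ * β / γ * R₀init))) ^ (1 / (σ - 1)) * S₀)
    (hRt : Rhat Stilde ≤ 1) :
    ∀ S : ℝ, 0 ≤ S → S ≤ S₀ → Rhat S ≤ 1 := by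
  intro S hS0 hSupper
  have hσ0 : 0 < σ := by linarith
  have hσ1 : 0 < σ - 1 := by linarith
  set c : ℝ := 1 - σ * β / γ * R₀init with hcdef
  have hc : 0 < c := by simp only [hcdef]; linarith
  have hbg : 0 < β / γ := div_pos hβ hγ
  set A : ℝ := β / γ * S₀ / (σ * α * c) with hAdef
  have hApos : 0 < A := div_pos (mul_pos hbg hS₀) (mul_pos (mul_pos hσ0 hα0) hc)
  set u' : ℝ := A ^ (1 / (σ - 1)) with hu'def
  have hu'pos : 0 < u' := Real.rpow_pos_of_pos hApos _
  have hkey : u' ^ (σ - 1) = A := by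
    rw [hu'def, ← Real.rpow_mul hApos.le, one_div_mul_cancel hσ1.ne', Real.rpow_one]
  have hSt' : Stilde = u' * S₀ := by rw [hSt]
  set u : ℝ := S / S₀ with hudef
  have hu0 : 0 ≤ u := div_nonneg hS0 hS₀.le
  -- simplified formula for Rhat
  have hform : ∀ x : ℝ, Rhat x = β / γ * x + α * (1 - c * (x / S₀) ^ σ) := by
    intro x
    rw [hRhat, hr]
    have hσβ : σ * β ≠ 0 := by positivity
    field_simp
  -- Bernoulli / tangent line inequality
  have hbern : 1 + σ * (u / u' - 1) ≤ (u / u') ^ σ := by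
    have h1 : (-1 : ℝ) ≤ u / u' - 1 := by
      have : 0 ≤ u / u' := div_nonneg hu0 hu'pos.le
      linarith
    have := one_add_mul_self_le_rpow_one_add h1 hσ.le
    have heq : (1 : ℝ) + (u / u' - 1) = u / u' := by ring
    rwa [heq] at this
  have hdivpow : (u / u') ^ σ = u ^ σ / u' ^ σ := Real.div_rpow hu0 hu'pos.le σ
  have hu'σ : u' ^ σ = u' ^ (σ - 1) * u' := by
    have h := Real.rpow_add hu'pos (σ - 1) 1
    rw [Real.rpow_one] at h
    rw [show σ - 1 + 1 = σ by ring] at h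
    exact h
  -- tangent line bound: u'^σ + σ u'^(σ-1) (u - u') ≤ u^σ
  have htangent : u' ^ σ + σ * u' ^ (σ - 1) * (u - u') ≤ u ^ σ := by
    have h2 : (1 + σ * (u / u' - 1)) * u' ^ σ ≤ (u / u') ^ σ * u' ^ σ := by
      apply mul_le_mul_of_nonneg_right hbern (Real.rpow_nonneg hu'pos.le σ)
    have h3 : (u / u') ^ σ * u' ^ σ = u ^ σ := by
      rw [hdivpow, div_mul_cancel₀]
      exact (Real.rpow_pos_of_pos hu'pos σ).ne'
    rw [h3] at h2
    calc u' ^ σ + σ * u' ^ (σ - 1) * (u - u')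
        = (1 + σ * (u / u' - 1)) * u' ^ σ := by
          rw [hu'σ]; field_simp
      _ ≤ u ^ σ := h2
  -- the coefficient identity: α * c * σ * u'^(σ-1) = β/γ * S₀
  have hcoef : α * c * σ * u' ^ (σ - 1) = β / γ * S₀ := by
    rw [hkey, hAdef]
    field_simp
  -- conclude Rhat S ≤ Rhat Stilde
  have hmain : Rhat S ≤ Rhat Stilde := by
    rw [hform S, hform Stilde, hSt']
    have hq : u' * S₀ / S₀ = u' := by field_simp
    rw [hq]
    have hSu : S = u * S₀ := by rw [hudef]; field_simp
    have hSS : (S / S₀ : ℝ) ^ σ = u ^ σ := by rw [hudef]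
    have hαc : 0 < α * c := mul_pos hα0 hc
    have h5 : β / γ * S₀ * u - β / γ * S₀ * u' ≤ α * c * u ^ σ - α * c * u' ^ σ := by
      have hmult := mul_le_mul_of_nonneg_left htangent hαc.le
      have heq : α * c * (σ * u' ^ (σ - 1) * (u - u')) = β / γ * S₀ * (u - u') := by
        rw [← hcoef]; ring
      nlinarith [hmult, heq]
    have h6 : β / γ * S = β / γ * S₀ * u := by
      rw [hudef]; field_simp
    rw [hSS]
    linarith [h5, h6]
  linarith
end

section
/- Let S, I, R, B : [0,∞) → ℝ be a solution of the SIRB system S' = −βSI, I' = βSI − γI + βσαIR, R' = γI − βσIR, B' = βσ(1−α)IR with β>0, γ>0, σ>1, 0<α<1, initial conditions S(0)>0, I(0)>0, R(0)≥0, B(0)≥0, S(0)+I(0)+R(0)+B(0)=1, and suppose S(t)>0 and I(t)>0 for all t≥0. Assume the basic reproduction number ℛ₀ := (β/γ)(S(0) + ασR(0)) satisfies ℛ₀ ≤ 1 and (β/γ)·(S(0) + ασ²R(0)) ≥ ασ. Then I is monotonically decreasing on [0,∞) and I(t) → 0 as t → ∞. -/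
/-!
Write `P = β (S + ασR) - γ` (`growthRate`) and `Q = (β/γ)(S + ασ²R) - ασ` (`growthRateDecay`),
so that `I' = P I` and `P' = -βγ I Q`. Along solutions `Q' = -σβ I Q + β²(σ - 1) S I / γ`;
since `βI = -S'/S`, the integrating factor of this linear equation is `S^(-σ)`, and
`(Q S^(-σ))' = β²(σ - 1) S I S^(-σ) / γ > 0`.
The two assumptions on the initial data say `P(0) ≤ 0 ≤ Q(0)`, hence `Q > 0` and `P < 0` for `t > 0`:
`I` strictly decreases, and from `t = 1` on it obeys `I' ≤ P(1) I`, so it decays exponentially.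
-/

open Set Filter Real

section Calculus

lemma strictMonoOn_Ici_of_hasDerivAt_pos {f f' : ℝ → ℝ} {a : ℝ}
    (hf : ∀ t, a ≤ t → HasDerivAt f (f' t) t) (hf' : ∀ t, a < t → 0 < f' t) :
    StrictMonoOn f (Ici a) :=
  strictMonoOn_of_hasDerivWithinAt_pos (convex_Ici a)
    (fun t ht => (hf t ht).continuousAt.continuousWithinAt)
    (fun t ht => (hf t (le_of_lt (by simpa using ht))).hasDerivWithinAt)
    (fun t ht => hf' t (by simpa using ht))

lemma strictAntiOn_Ici_of_hasDerivAt_neg {f f' : ℝ → ℝ} {a : ℝ}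
    (hf : ∀ t, a ≤ t → HasDerivAt f (f' t) t) (hf' : ∀ t, a < t → f' t < 0) :
    StrictAntiOn f (Ici a) :=
  strictAntiOn_of_hasDerivWithinAt_neg (convex_Ici a)
    (fun t ht => (hf t ht).continuousAt.continuousWithinAt)
    (fun t ht => (hf t (le_of_lt (by simpa using ht))).hasDerivWithinAt)
    (fun t ht => hf' t (by simpa using ht))

lemma antitoneOn_Ici_of_hasDerivAt_nonpos {f f' : ℝ → ℝ} {a : ℝ}
    (hf : ∀ t, a ≤ t → HasDerivAt f (f' t) t) (hf' : ∀ t, a < t → f' t ≤ 0) :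
    AntitoneOn f (Ici a) :=
  antitoneOn_of_hasDerivWithinAt_nonpos (convex_Ici a)
    (fun t ht => (hf t ht).continuousAt.continuousWithinAt)
    (fun t ht => (hf t (le_of_lt (by simpa using ht))).hasDerivWithinAt)
    (fun t ht => hf' t (by simpa using ht))

lemma HasDerivAt.mul_rpow_neg {f g : ℝ → ℝ} {f' g' σ t : ℝ} (hf : HasDerivAt f f' t)
    (hg : HasDerivAt g g' t) (hg₀ : 0 < g t) :
    HasDerivAt (fun s => f s * g s ^ (-σ)) ((f' - σ * f t * g' / g t) * g t ^ (-σ)) t := by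
  refine (hf.mul (hg.rpow_const (Or.inl hg₀.ne'))).congr_deriv ?_
  rw [rpow_sub_one hg₀.ne']
  field_simp
  ring

/-- A nonnegative function with `f' ≤ -c f` on `[a, ∞)` is bounded by `f a * exp (-c (t - a))`. -/
lemma tendsto_zero_of_hasDerivAt_le_neg_mul {f f' : ℝ → ℝ} {a c : ℝ} (hc : 0 < c)
    (hf : ∀ t, a ≤ t → HasDerivAt f (f' t) t) (hf' : ∀ t, a < t → f' t ≤ -c * f t)
    (hf₀ : ∀ t, a ≤ t → 0 ≤ f t) : Tendsto f atTop (nhds 0) := by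
  have hanti : AntitoneOn (fun t => f t * exp (c * t)) (Ici a) := by
    refine antitoneOn_Ici_of_hasDerivAt_nonpos
      (fun t ht => (hf t ht).mul (((hasDerivAt_id' t).const_mul c).exp)) fun t ht => ?_
    have := hf' t ht
    have := exp_pos (c * t)
    nlinarith
  have hbound : ∀ t, a ≤ t → f t ≤ f a * exp (c * a) * exp (-(c * t)) := by
    intro t ht
    have := hanti self_mem_Ici ht ht
    rw [exp_neg, ← div_eq_mul_inv, le_div_iff₀ (exp_pos _)]
    simpa using this
  have hlim : Tendsto (fun t => f a * exp (c * a) * exp (-(c * t))) atTop (nhds 0) := by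
    simpa using (tendsto_exp_neg_atTop_nhds_zero.comp
      (tendsto_id.const_mul_atTop hc)).const_mul (f a * exp (c * a))
  exact tendsto_of_tendsto_of_tendsto_of_le_of_le' tendsto_const_nhds hlim
    (eventually_ge_atTop a |>.mono hf₀) (eventually_ge_atTop a |>.mono hbound)

end Calculus

section SIRB

variable {β γ σ α : ℝ} {S I R : ℝ → ℝ}

noncomputable def growthRate (β γ σ α : ℝ) (S R : ℝ → ℝ) (t : ℝ) : ℝ :=
  β * (S t + α * σ * R t) - γ

noncomputable def growthRateDecay (β γ σ α : ℝ) (S R : ℝ → ℝ) (t : ℝ) : ℝ :=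
  β / γ * (S t + α * σ ^ 2 * R t) - α * σ

lemma hasDerivAt_growthRate {t : ℝ} (hγ : γ ≠ 0)
    (hS' : HasDerivAt S (-(β * S t * I t)) t)
    (hR' : HasDerivAt R (γ * I t - β * σ * I t * R t) t) :
    HasDerivAt (growthRate β γ σ α S R) (-(β * γ * I t * growthRateDecay β γ σ α S R t)) t := by
  refine ((hS'.add (hR'.const_mul (α * σ))).const_mul β |>.sub_const γ).congr_deriv ?_
  unfold growthRateDecay
  field_simp
  ring

lemma hasDerivAt_growthRateDecay {t : ℝ} (hγ : γ ≠ 0)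
    (hS' : HasDerivAt S (-(β * S t * I t)) t)
    (hR' : HasDerivAt R (γ * I t - β * σ * I t * R t) t) :
    HasDerivAt (growthRateDecay β γ σ α S R)
      (β ^ 2 * (σ - 1) / γ * S t * I t - σ * β * I t * growthRateDecay β γ σ α S R t) t := by
  refine ((hS'.add (hR'.const_mul (α * σ ^ 2))).const_mul (β / γ) |>.sub_const (α * σ)).congr_deriv ?_
  unfold growthRateDecay
  field_simp
  ring

lemma growthRateDecay_pos (hβ : 0 < β) (hγ : 0 < γ) (hσ : 1 < σ)
    (hS' : ∀ t, 0 ≤ t → HasDerivAt S (-(β * S t * I t)) t)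
    (hR' : ∀ t, 0 ≤ t → HasDerivAt R (γ * I t - β * σ * I t * R t) t)
    (hSpos : ∀ t, 0 ≤ t → 0 < S t) (hIpos : ∀ t, 0 ≤ t → 0 < I t)
    (h₀ : 0 ≤ growthRateDecay β γ σ α S R 0) {t : ℝ} (ht : 0 < t) :
    0 < growthRateDecay β γ σ α S R t := by
  set Q := growthRateDecay β γ σ α S R
  have hmono : StrictMonoOn (fun s => Q s * S s ^ (-σ)) (Ici 0) := by
    refine strictMonoOn_Ici_of_hasDerivAt_pos (fun s hs =>
      (hasDerivAt_growthRateDecay hγ.ne' (hS' s hs) (hR' s hs)).mul_rpow_neg (hS' s hs)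
        (hSpos s hs)) fun s hs => ?_
    have hS := hSpos s hs.le
    have hI := hIpos s hs.le
    have hσ' : 0 < σ - 1 := sub_pos.2 hσ
    have hfactor : β ^ 2 * (σ - 1) / γ * S s * I s - σ * β * I s * Q s
        - σ * Q s * -(β * S s * I s) / S s = β ^ 2 * (σ - 1) / γ * S s * I s := by
      field_simp
      ring
    rw [hfactor]
    positivity
  have hlt := hmono self_mem_Ici ht.le ht
  have hF₀ : 0 ≤ Q 0 * S 0 ^ (-σ) := mul_nonneg h₀ (rpow_nonneg (hSpos 0 le_rfl).le _)
  exact pos_of_mul_pos_left (hF₀.trans_lt hlt) (rpow_nonneg (hSpos t ht.le).le _)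

lemma strictAntiOn_growthRate (hβ : 0 < β) (hγ : 0 < γ)
    (hS' : ∀ t, 0 ≤ t → HasDerivAt S (-(β * S t * I t)) t)
    (hR' : ∀ t, 0 ≤ t → HasDerivAt R (γ * I t - β * σ * I t * R t) t)
    (hIpos : ∀ t, 0 ≤ t → 0 < I t) (hQ : ∀ t, 0 < t → 0 < growthRateDecay β γ σ α S R t) :
    StrictAntiOn (growthRate β γ σ α S R) (Ici 0) :=
  strictAntiOn_Ici_of_hasDerivAt_neg
    (fun t ht => hasDerivAt_growthRate hγ.ne' (hS' t ht) (hR' t ht)) fun t ht => by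
      have := hIpos t ht.le
      have := hQ t ht
      simp only [neg_neg_iff_pos]
      positivity

end SIRB

theorem sirb_no_epidemic_case1_general (β γ σ α : ℝ) (S I R : ℝ → ℝ)
    (hβ : 0 < β) (hγ : 0 < γ) (hσ : 1 < σ)
    (hS' : ∀ t : ℝ, 0 ≤ t → HasDerivAt S (-(β * S t * I t)) t)
    (hI' : ∀ t : ℝ, 0 ≤ t → HasDerivAt I (β * S t * I t - γ * I t + β * σ * α * I t * R t) t)
    (hR' : ∀ t : ℝ, 0 ≤ t → HasDerivAt R (γ * I t - β * σ * I t * R t) t)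
    (hSpos : ∀ t : ℝ, 0 ≤ t → 0 < S t) (hIpos : ∀ t : ℝ, 0 ≤ t → 0 < I t)
    (hR0le : β / γ * (S 0 + α * σ * R 0) ≤ 1)
    (hcase : α * σ ≤ β / γ * (S 0 + α * σ ^ 2 * R 0)) :
    StrictAntiOn I (Set.Ici 0) ∧ Filter.Tendsto I Filter.atTop (nhds 0) := by
  set P := growthRate β γ σ α S R
  have hQ : ∀ t, 0 < t → 0 < growthRateDecay β γ σ α S R t := fun t ht =>
    growthRateDecay_pos hβ hγ hσ hS' hR' hSpos hIpos (sub_nonneg.2 hcase) ht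
  have hP_anti : StrictAntiOn P (Ici 0) := strictAntiOn_growthRate hβ hγ hS' hR' hIpos hQ
  have hP₀ : P 0 ≤ 0 := by
    rw [div_mul_eq_mul_div, div_le_one hγ] at hR0le
    exact sub_nonpos.2 hR0le
  have hP_neg : ∀ t, 0 < t → P t < 0 := fun t ht => (hP_anti self_mem_Ici ht.le ht).trans_le hP₀
  have hI_deriv : ∀ t, 0 ≤ t → HasDerivAt I (P t * I t) t := fun t ht =>
    (hI' t ht).congr_deriv (by simp only [P, growthRate]; ring)
  refine ⟨strictAntiOn_Ici_of_hasDerivAt_neg hI_deriv fun t ht =>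
    mul_neg_of_neg_of_pos (hP_neg t ht) (hIpos t ht.le), ?_⟩
  refine tendsto_zero_of_hasDerivAt_le_neg_mul (a := 1) (neg_pos.2 (hP_neg 1 one_pos))
    (fun t ht => hI_deriv t (zero_le_one.trans ht)) (fun t ht => ?_)
    (fun t ht => (hIpos t (zero_le_one.trans ht)).le)
  have ht₀ : (0 : ℝ) ≤ t := zero_le_one.trans ht.le
  rw [neg_neg]
  exact mul_le_mul_of_nonneg_right (hP_anti.antitoneOn (mem_Ici.2 zero_le_one) ht₀ ht.le)
    (hIpos t ht₀).le

/-- For `σ > 1`, if `ℛ₀ ≤ 1` and `(β/γ)(S(0) + ασ²R(0)) ≥ ασ`, then `I`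
is monotonically decreasing on `[0,∞)` and `I(t) → 0` as `t → ∞`. -/
theorem sirb_no_epidemic_case1 (β γ σ α : ℝ) (S I R B : ℝ → ℝ)
    (hβ : 0 < β) (hγ : 0 < γ) (hσ : 1 < σ) (hα0 : 0 < α) (hα1 : α < 1)
    (hS' : ∀ t : ℝ, 0 ≤ t → HasDerivAt S (-(β * S t * I t)) t)
    (hI' : ∀ t : ℝ, 0 ≤ t → HasDerivAt I (β * S t * I t - γ * I t + β * σ * α * I t * R t) t)
    (hR' : ∀ t : ℝ, 0 ≤ t → HasDerivAt R (γ * I t - β * σ * I t * R t) t)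
    (hB' : ∀ t : ℝ, 0 ≤ t → HasDerivAt B (β * σ * (1 - α) * I t * R t) t)
    (hS0 : 0 < S 0) (hI0 : 0 < I 0) (hR0 : 0 ≤ R 0) (hB0 : 0 ≤ B 0)
    (hsum : S 0 + I 0 + R 0 + B 0 = 1)
    (hSpos : ∀ t : ℝ, 0 ≤ t → 0 < S t) (hIpos : ∀ t : ℝ, 0 ≤ t → 0 < I t)
    (hR0le : β / γ * (S 0 + α * σ * R 0) ≤ 1)
    (hcase : α * σ ≤ β / γ * (S 0 + α * σ ^ 2 * R 0)) :
    StrictAntiOn I (Set.Ici 0) ∧ Filter.Tendsto I Filter.atTop (nhds 0) :=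
  sirb_no_epidemic_case1_general β γ σ α S I R hβ hγ hσ hS' hI' hR' hSpos hIpos hR0le hcase
end

section
/- Let S, I, R, B : [0,∞) → ℝ be a solution of the SIRB system S' = −βSI, I' = βSI − γI + βσαIR, R' = γI − βσIR, B' = βσ(1−α)IR with β>0, γ>0, σ>1, 0<α<1, initial conditions S(0)>0, I(0)>0, R(0)≥0, B(0)≥0 with (σβ/γ)·R(0) < 1, S(0)+I(0)+R(0)+B(0)=1, and suppose S(t)>0 and I(t)>0 for all t≥0. Define r(S) := (γ/(σβ))·(1 − (1 − (σβ/γ)·R(0))·(S/S(0))^σ), R̂(S) := (β/γ)·(S + ασ·r(S)), p(S) := (S(0) − S) + (γ/β)·ln(S/S(0)), and q(R) := (γ/(σβ))·ln((1 − (σβ/γ)R)/(1 − (σβ/γ)R(0))) + (R − R(0)). Assume ℛ₀ := R̂(S(0)) ≤ 1, (β/γ)·(S(0) + ασ²R(0)) < ασ, and R̂(S̃) > 1 where S̃ := ((β/γ)·S(0)/(σα·(1 − (σβ/γ)·R(0))))^(1/(σ−1)) · S(0); let Ŝ₂ be the larger of the two roots of R̂(S) = 1 in (0, S(0)). If I(0)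 + p(Ŝ₂) − α·q(r(Ŝ₂)) ≤ 0, then I is monotonically decreasing on [0,∞), and I(t) → 0 as t → ∞. -/
/-!
Along a solution, `R = r(S)` (both solve the same linear ODE driven by `I`), and
`I - p(S) + α q(R)` is conserved. If `S` ever reached `Ŝ₂`, conservation would force
`I ≤ I(0) + p(Ŝ₂) - α q(r(Ŝ₂)) ≤ 0` at that moment; so `S` stays above `Ŝ₂ > S̃`. Beyond its
critical point `S̃`, `R̂` is strictly decreasing, hence `R̂(S(t)) < R̂(Ŝ₂) = 1` and
`I' = γ I (R̂(S) - 1) < 0`. Finally, if `I` stayed above some `ε > 0`, then `S' ≤ -β Ŝ₂ ε` would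
drive `S` below `Ŝ₂`.
-/

open Set Filter Topology

theorem eq_zero_of_hasDerivAt_eq_mul {f K : ℝ → ℝ} (hK : ContinuousOn K (Ici 0))
    (hf : ∀ t, 0 ≤ t → HasDerivAt f (K t * f t) t) (h0 : f 0 = 0) {t : ℝ} (ht : 0 ≤ t) :
    f t = 0 := by
  obtain ⟨C, hC⟩ := isCompact_Icc.exists_bound_of_continuousOn (hK.mono Icc_subset_Ici_self)
  have hgronwall := norm_le_gronwallBound_of_norm_deriv_right_le (δ := 0) (ε := 0)
    (fun x hx => (hf x hx.1).continuousAt.continuousWithinAt)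
    (fun x hx => (hf x hx.1).hasDerivWithinAt) (by simp [h0])
    (fun x hx => by
      rw [norm_mul, add_zero]
      exact mul_le_mul_of_nonneg_right (hC x (Ico_subset_Icc_self hx)) (norm_nonneg _))
    t ⟨ht, le_rfl⟩
  rwa [gronwallBound_ε0_δ0, norm_le_zero_iff] at hgronwall

theorem tendsto_zero_of_antitoneOn_of_hasDerivAt_le {f g g' : ℝ → ℝ} {k m : ℝ} (hk : 0 < k)
    (hf : AntitoneOn f (Ici 0)) (hf0 : ∀ t, 0 ≤ t → 0 ≤ f t)
    (hg : ∀ t, 0 ≤ t → HasDerivAt g (g' t) t) (hg' : ∀ t, 0 ≤ t → g' t ≤ -(k * f t))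
    (hm : ∀ t, 0 ≤ t → m ≤ g t) : Tendsto f atTop (𝓝 0) := by
  refine tendsto_order.2 ⟨fun a ha => eventually_atTop.2 ⟨0, fun t ht => ha.trans_le (hf0 t ht)⟩,
    fun ε hε => ?_⟩
  obtain ⟨T, hT0, hT⟩ : ∃ T, 0 ≤ T ∧ f T < ε := by
    by_contra! hge
    -- `g` would decrease at least linearly with slope `k ε`, contradicting `m ≤ g`.
    set T := (g 0 - m) / (k * ε) + 1
    have hkε : 0 < k * ε := mul_pos hk hε
    have hT0 : 0 ≤ T := by
      have := div_nonneg (sub_nonneg.2 (hm 0 le_rfl)) hkε.le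
      linarith
    have hgT := image_le_of_deriv_right_le_deriv_boundary (a := 0) (b := T)
      (B := fun t => g 0 - k * ε * t) (B' := fun _ => -(k * ε))
      (fun x hx => (hg x hx.1).continuousAt.continuousWithinAt)
      (fun x hx => (hg x hx.1).hasDerivWithinAt) (by simp) (by fun_prop)
      (fun x _ => by
        simpa using ((hasDerivAt_id x).const_mul (k * ε)).const_sub (g 0) |>.hasDerivWithinAt)
      (fun x hx => (hg' x hx.1).trans (neg_le_neg (mul_le_mul_of_nonneg_left (hge x hx.1) hk.le)))
      ⟨hT0, le_rfl⟩
    have hkT : k * ε * T = g 0 - m + k * ε := by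
      simp only [T]
      field_simp
    linarith [hm T hT0]
  exact eventually_atTop.2 ⟨T, fun t ht => (hf hT0 (hT0.trans ht) ht).trans_lt hT⟩

theorem strictAntiOn_mul_sub_mul_rpow {a b σ : ℝ} (ha : 0 < a) (hb : 0 < b) (hσ : 1 < σ) :
    StrictAntiOn (fun y => a * y - b * y ^ σ) (Ici ((a / (σ * b)) ^ (1 / (σ - 1)))) := by
  set y₀ := (a / (σ * b)) ^ (1 / (σ - 1))
  have hσb : 0 < σ * b := by positivity
  have hy₀ : 0 < y₀ := by positivity
  have hy₀σ : y₀ ^ (σ - 1) = a / (σ * b) := by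
    rw [← Real.rpow_mul (by positivity), one_div_mul_cancel (by linarith), Real.rpow_one]
  refine strictAntiOn_of_hasDerivWithinAt_neg (convex_Ici y₀)
    (f' := fun y => a - b * (σ * y ^ (σ - 1))) ?_ (fun y _ => ?_) (fun y hy => ?_)
  · exact ((continuous_const.mul continuous_id).sub
      (continuous_const.mul (Real.continuous_rpow_const (by linarith)))).continuousOn
  · refine ((((hasDerivAt_id' y).const_mul a).fun_sub
      ((Real.hasDerivAt_rpow_const (Or.inr hσ.le)).const_mul b)).congr_deriv ?_).hasDerivWithinAt
    ring
  · rw [interior_Ici] at hy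
    have hlt : a / (σ * b) < y ^ (σ - 1) :=
      hy₀σ ▸ Real.rpow_lt_rpow hy₀.le hy (by linarith)
    rw [div_lt_iff₀ hσb] at hlt
    linarith

namespace SIRB

noncomputable def r (β γ σ S₀ R₀ x : ℝ) : ℝ :=
  γ / (σ * β) * (1 - (1 - σ * β / γ * R₀) * (x / S₀) ^ σ)

noncomputable def Rhat (β γ σ α S₀ R₀ x : ℝ) : ℝ :=
  β / γ * (x + α * σ * r β γ σ S₀ R₀ x)

noncomputable def p (β γ S₀ x : ℝ) : ℝ :=
  (S₀ - x) + γ / β * Real.log (x / S₀)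

noncomputable def q (β γ σ R₀ x : ℝ) : ℝ :=
  γ / (σ * β) * Real.log ((1 - σ * β / γ * x) / (1 - σ * β / γ * R₀)) + (x - R₀)

/-- The equation for `B` is omitted: it does not feed back into `S`, `I`, `R`. -/
structure IsSolution (β γ σ α : ℝ) (S I R : ℝ → ℝ) : Prop where
  hasDerivAt_S : ∀ t, 0 ≤ t → HasDerivAt S (-(β * S t * I t)) t
  hasDerivAt_I : ∀ t, 0 ≤ t → HasDerivAt I (β * S t * I t - γ * I t + β * σ * α * I t * R t) t
  hasDerivAt_R : ∀ t, 0 ≤ t → HasDerivAt R (γ * I t - β * σ * I t * R t) t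

variable {β γ σ α S₀ R₀ : ℝ}

theorem r_self (hβ : β ≠ 0) (hγ : γ ≠ 0) (hσ : σ ≠ 0) (hS₀ : S₀ ≠ 0) :
    r β γ σ S₀ R₀ S₀ = R₀ := by
  rw [r, div_self hS₀, Real.one_rpow]
  field_simp
  ring

theorem one_sub_mul_r (hβ : β ≠ 0) (hγ : γ ≠ 0) (hσ : σ ≠ 0) (x : ℝ) :
    1 - σ * β / γ * r β γ σ S₀ R₀ x = (1 - σ * β / γ * R₀) * (x / S₀) ^ σ := by
  rw [r]
  field_simp
  ring

theorem p_self (β γ S₀ : ℝ) : p β γ S₀ S₀ = 0 := by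
  rcases eq_or_ne S₀ 0 with h | h <;> simp [p, h]

theorem q_self (β γ σ R₀ : ℝ) : q β γ σ R₀ R₀ = 0 := by
  rcases eq_or_ne (1 - σ * β / γ * R₀) 0 with h | h <;> simp [q, h]

theorem Rhat_eq (hβ : β ≠ 0) (hγ : γ ≠ 0) (hσ : σ ≠ 0) (hS₀ : S₀ ≠ 0) (x : ℝ) :
    Rhat β γ σ α S₀ R₀ x
      = β / γ * S₀ * (x / S₀) - α * (1 - σ * β / γ * R₀) * (x / S₀) ^ σ + α := by
  rw [Rhat, r]
  field_simp
  ring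

theorem strictAntiOn_Rhat (hβ : 0 < β) (hγ : 0 < γ) (hσ : 1 < σ) (hα : 0 < α) (hS₀ : 0 < S₀)
    (hR₀ : σ * β / γ * R₀ < 1) :
    StrictAntiOn (Rhat β γ σ α S₀ R₀)
      (Ici ((β / γ * S₀ / (σ * α * (1 - σ * β / γ * R₀))) ^ (1 / (σ - 1)) * S₀)) := by
  have hc : 0 < 1 - σ * β / γ * R₀ := sub_pos.2 hR₀
  set y₀ := (β / γ * S₀ / (σ * α * (1 - σ * β / γ * R₀))) ^ (1 / (σ - 1))
  have hanti : StrictAntiOn (fun y => β / γ * S₀ * y - α * (1 - σ * β / γ * R₀) * y ^ σ)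
      (Ici y₀) := by
    simp only [y₀, mul_assoc σ α]
    exact strictAntiOn_mul_sub_mul_rpow (by positivity) (by positivity) hσ
  intro x hx y hy hxy
  have := hanti ((le_div_iff₀ hS₀).2 hx) ((le_div_iff₀ hS₀).2 hy) (div_lt_div_of_pos_right hxy hS₀)
  simp only [Rhat_eq hβ.ne' hγ.ne' (by positivity : σ ≠ 0) hS₀.ne'] at this ⊢
  linarith

variable {S I R : ℝ → ℝ} {t : ℝ}

theorem hasDerivAt_r_comp (hβ : β ≠ 0) (hγ : γ ≠ 0) (hσ : σ ≠ 0) (hS₀ : 0 < S₀)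
    (hS : HasDerivAt S (-(β * S t * I t)) t) (hSt : 0 < S t) :
    HasDerivAt (fun u => r β γ σ S₀ R₀ (S u)) (γ * I t - β * σ * I t * r β γ σ S₀ R₀ (S t)) t := by
  have hx : 0 < S t / S₀ := div_pos hSt hS₀
  have hX : HasDerivAt (fun u => (S u / S₀) ^ σ)
      (-(β * S t * I t) / S₀ * σ * (S t / S₀) ^ (σ - 1)) t :=
    (hS.div_const S₀).rpow_const (Or.inl hx.ne')
  refine (((hX.const_mul (1 - σ * β / γ * R₀)).const_sub 1).const_mul (γ / (σ * β))).congr_deriv ?_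
  rw [r, Real.rpow_sub_one hx.ne']
  field_simp
  ring

theorem hasDerivAt_p_comp (hβ : β ≠ 0) (hS₀ : 0 < S₀)
    (hS : HasDerivAt S (-(β * S t * I t)) t) (hSt : 0 < S t) :
    HasDerivAt (fun u => p β γ S₀ (S u)) (β * S t * I t - γ * I t) t := by
  refine ((hS.const_sub S₀).add
    (((hS.div_const S₀).log (div_pos hSt hS₀).ne').const_mul (γ / β))).congr_deriv ?_
  field_simp
  ring

theorem hasDerivAt_q_comp (hβ : β ≠ 0) (hγ : γ ≠ 0) (hσ : σ ≠ 0)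
    (hR : HasDerivAt R (γ * I t - β * σ * I t * R t) t) (hRt : 0 < 1 - σ * β / γ * R t)
    (hR₀ : 0 < 1 - σ * β / γ * R₀) :
    HasDerivAt (fun u => q β γ σ R₀ (R u)) (-(β * σ * I t * R t)) t := by
  have hlog := (((hR.const_mul (σ * β / γ)).const_sub 1).div_const (1 - σ * β / γ * R₀)).log
    (div_pos hRt hR₀).ne'
  have hnum : σ * β / γ * (γ * I t - β * σ * I t * R t) = σ * β * I t * (1 - σ * β / γ * R t) := by
    field_simp
  refine ((hlog.const_mul (γ / (σ * β))).add (hR.sub_const R₀)).congr_deriv ?_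
  rw [div_div_div_cancel_right₀ hR₀.ne', neg_div, hnum, mul_div_assoc, div_self hRt.ne']
  field_simp
  ring

namespace IsSolution

theorem R_eq_r (h : IsSolution β γ σ α S I R) (hβ : β ≠ 0) (hγ : γ ≠ 0) (hσ : σ ≠ 0)
    (hS : ∀ t, 0 ≤ t → 0 < S t) (ht : 0 ≤ t) : R t = r β γ σ (S 0) (R 0) (S t) := by
  have hS0 := hS 0 le_rfl
  refine sub_eq_zero.1 <| eq_zero_of_hasDerivAt_eq_mul
    (f := fun u => R u - r β γ σ (S 0) (R 0) (S u)) (K := fun u => -(β * σ * I u))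
    (fun u hu => ((h.hasDerivAt_I u hu).continuousAt.const_mul _).neg.continuousWithinAt)
    (fun u hu => ((h.hasDerivAt_R u hu).sub
      (hasDerivAt_r_comp hβ hγ hσ hS0 (h.hasDerivAt_S u hu) (hS u hu))).congr_deriv (by ring))
    (by simp [r_self hβ hγ hσ hS0.ne']) ht

theorem I_eq (h : IsSolution β γ σ α S I R) (hβ : 0 < β) (hγ : 0 < γ) (hσ : 0 < σ)
    (hS : ∀ t, 0 ≤ t → 0 < S t) (hR₀ : σ * β / γ * R 0 < 1) (ht : 0 ≤ t) :
    I t = I 0 + p β γ (S 0) (S t) - α * q β γ σ (R 0) (R t) := by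
  have hc : 0 < 1 - σ * β / γ * R 0 := sub_pos.2 hR₀
  have hRpos : ∀ u, 0 ≤ u → 0 < 1 - σ * β / γ * R u := fun u hu => by
    rw [h.R_eq_r hβ.ne' hγ.ne' hσ.ne' hS hu, one_sub_mul_r hβ.ne' hγ.ne' hσ.ne']
    exact mul_pos hc (Real.rpow_pos_of_pos (div_pos (hS u hu) (hS 0 le_rfl)) σ)
  have hderiv : ∀ u, 0 ≤ u → HasDerivAt
      (fun u => I u - (p β γ (S 0) (S u) - α * q β γ σ (R 0) (R u))) 0 u := fun u hu =>
    ((h.hasDerivAt_I u hu).sub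
      ((hasDerivAt_p_comp hβ.ne' (hS 0 le_rfl) (h.hasDerivAt_S u hu) (hS u hu)).sub
        ((hasDerivAt_q_comp hβ.ne' hγ.ne' hσ.ne' (h.hasDerivAt_R u hu) (hRpos u hu)
          hc).const_mul α))).congr_deriv (by ring)
  have hconst := constant_of_has_deriv_right_zero
    (fun u hu => (hderiv u hu.1).continuousAt.continuousWithinAt)
    (fun u hu => (hderiv u hu.1).hasDerivWithinAt) t ⟨ht, le_rfl⟩
  simp only [p_self, q_self] at hconst
  linarith

theorem hasDerivAt_I_eq_mul_Rhat (h : IsSolution β γ σ α S I R) (hβ : β ≠ 0) (hγ : γ ≠ 0)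
    (hσ : σ ≠ 0) (hS : ∀ t, 0 ≤ t → 0 < S t) (ht : 0 ≤ t) :
    HasDerivAt I (γ * I t * (Rhat β γ σ α (S 0) (R 0) (S t) - 1)) t := by
  refine (h.hasDerivAt_I t ht).congr_deriv ?_
  rw [h.R_eq_r hβ hγ hσ hS ht, Rhat]
  field_simp
  ring

theorem lt_S_of_first_integral_nonpos (h : IsSolution β γ σ α S I R) (hβ : 0 < β) (hγ : 0 < γ)
    (hσ : 0 < σ) (hS : ∀ t, 0 ≤ t → 0 < S t) (hI : ∀ t, 0 ≤ t → 0 < I t)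
    (hR₀ : σ * β / γ * R 0 < 1) {Ŝ : ℝ} (hŜ : Ŝ < S 0)
    (hmin : I 0 + p β γ (S 0) Ŝ - α * q β γ σ (R 0) (r β γ σ (S 0) (R 0) Ŝ) ≤ 0)
    (ht : 0 ≤ t) : Ŝ < S t := by
  by_contra! hle
  obtain ⟨t₀, ht₀, hSt₀⟩ := intermediate_value_Icc' ht
    (fun u hu => (h.hasDerivAt_S u hu.1).continuousAt.continuousWithinAt) ⟨hle, hŜ.le⟩
  have hIt₀ := h.I_eq hβ hγ hσ hS hR₀ ht₀.1
  rw [h.R_eq_r hβ.ne' hγ.ne' hσ.ne' hS ht₀.1, hSt₀] at hIt₀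
  linarith [hI t₀ ht₀.1]

end IsSolution

end SIRB

theorem sirb_delayed_epidemic_fails_general (β γ σ α : ℝ) (S I R : ℝ → ℝ)
    (hβ : 0 < β) (hγ : 0 < γ) (hσ : 1 < σ) (hα0 : 0 < α)
    (hS' : ∀ t : ℝ, 0 ≤ t → HasDerivAt S (-(β * S t * I t)) t)
    (hI' : ∀ t : ℝ, 0 ≤ t → HasDerivAt I (β * S t * I t - γ * I t + β * σ * α * I t * R t) t)
    (hR' : ∀ t : ℝ, 0 ≤ t → HasDerivAt R (γ * I t - β * σ * I t * R t) t)
    (hS0 : 0 < S 0)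
    (hSpos : ∀ t : ℝ, 0 ≤ t → 0 < S t) (hIpos : ∀ t : ℝ, 0 ≤ t → 0 < I t)
    (hR0lt1 : σ * β / γ * R 0 < 1)
    (r Rhat : ℝ → ℝ)
    (hr : ∀ x : ℝ, r x = γ / (σ * β) * (1 - (1 - σ * β / γ * R 0) * (x / S 0) ^ σ))
    (hRhat : ∀ x : ℝ, Rhat x = β / γ * (x + α * σ * r x))
    (p q : ℝ → ℝ)
    (hp : ∀ x : ℝ, p x = (S 0 - x) + γ / β * Real.log (x / S 0))
    (hq : ∀ x : ℝ,
      q x = γ / (σ * β) * Real.log ((1 - σ * β / γ * x) / (1 - σ * β / γ * R 0)) + (x - R 0))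
    (Stilde : ℝ)
    (hSt : Stilde = (β / γ * S 0 / (σ * α * (1 - σ * β / γ * R 0))) ^ (1 / (σ - 1)) * S 0)
    (Shat2 : ℝ) (hS2a : Stilde < Shat2) (hS2b : Shat2 < S 0) (hS2root : Rhat Shat2 = 1)
    (hmin : I 0 + p Shat2 - α * q (r Shat2) ≤ 0) :
    StrictAntiOn I (Set.Ici 0) ∧ Filter.Tendsto I Filter.atTop (nhds 0) := by
  obtain rfl : r = SIRB.r β γ σ (S 0) (R 0) := funext hr
  obtain rfl : Rhat = SIRB.Rhat β γ σ α (S 0) (R 0) := funext hRhat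
  obtain rfl : p = SIRB.p β γ (S 0) := funext hp
  obtain rfl : q = SIRB.q β γ σ (R 0) := funext hq
  have hStilde : 0 < Stilde := by
    have := sub_pos.2 hR0lt1
    rw [hSt]
    positivity
  subst hSt
  have hσ0 : 0 < σ := one_pos.trans hσ
  have hsol : SIRB.IsSolution β γ σ α S I R := ⟨hS', hI', hR'⟩
  have hS_gt : ∀ t, 0 ≤ t → Shat2 < S t := fun t ht =>
    hsol.lt_S_of_first_integral_nonpos hβ hγ hσ0 hSpos hIpos hR0lt1 hS2b hmin ht
  have hRhat_lt : ∀ t, 0 ≤ t → SIRB.Rhat β γ σ α (S 0) (R 0) (S t) < 1 := fun t ht =>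
    hS2root ▸ SIRB.strictAntiOn_Rhat hβ hγ hσ hα0 hS0 hR0lt1 hS2a.le
      (hS2a.trans (hS_gt t ht)).le (hS_gt t ht)
  have hIanti : StrictAntiOn I (Ici 0) := by
    refine strictAntiOn_of_hasDerivWithinAt_neg (convex_Ici 0)
      (fun t ht => (hI' t ht).continuousAt.continuousWithinAt)
      (fun t ht => (hsol.hasDerivAt_I_eq_mul_Rhat hβ.ne' hγ.ne' hσ0.ne' hSpos
        (interior_subset ht)).hasDerivWithinAt) (fun t ht => ?_)
    have ht0 : 0 ≤ t := interior_subset ht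
    exact mul_neg_of_pos_of_neg (mul_pos hγ (hIpos t ht0)) (sub_neg.2 (hRhat_lt t ht0))
  refine ⟨hIanti, tendsto_zero_of_antitoneOn_of_hasDerivAt_le (mul_pos hβ (hStilde.trans hS2a))
    hIanti.antitoneOn (fun t ht => (hIpos t ht).le) hS' (fun t ht => ?_)
    (fun t ht => (hS_gt t ht).le)⟩
  have := mul_le_mul_of_nonneg_left (hS_gt t ht).le hβ.le
  exact neg_le_neg (mul_le_mul_of_nonneg_right this (hIpos t ht).le)

/-- Delayed-epidemic criterion, non-epidemic case: under `σ > 1`,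
`ℛ₀ ≤ 1`, `(β/γ)(S(0) + ασ²R(0)) < ασ` and `R̂(S̃) > 1`, if
`I(0) + p(Ŝ₂) − α q(r(Ŝ₂)) ≤ 0` (with `Ŝ₂` the larger root of `R̂ = 1` in `(0,S(0))`),
then `I` is monotonically decreasing on `[0,∞)` and `I(t) → 0`. -/
theorem sirb_delayed_epidemic_fails (β γ σ α : ℝ) (S I R B : ℝ → ℝ)
    (hβ : 0 < β) (hγ : 0 < γ) (hσ : 1 < σ) (hα0 : 0 < α) (hα1 : α < 1)
    (hS' : ∀ t : ℝ, 0 ≤ t → HasDerivAt S (-(β * S t * I t)) t)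
    (hI' : ∀ t : ℝ, 0 ≤ t → HasDerivAt I (β * S t * I t - γ * I t + β * σ * α * I t * R t) t)
    (hR' : ∀ t : ℝ, 0 ≤ t → HasDerivAt R (γ * I t - β * σ * I t * R t) t)
    (hB' : ∀ t : ℝ, 0 ≤ t → HasDerivAt B (β * σ * (1 - α) * I t * R t) t)
    (hS0 : 0 < S 0) (hI0 : 0 < I 0) (hR0 : 0 ≤ R 0) (hB0 : 0 ≤ B 0)
    (hsum : S 0 + I 0 + R 0 + B 0 = 1)
    (hSpos : ∀ t : ℝ, 0 ≤ t → 0 < S t) (hIpos : ∀ t : ℝ, 0 ≤ t → 0 < I t)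
    (hR0lt1 : σ * β / γ * R 0 < 1)
    (r Rhat : ℝ → ℝ)
    (hr : ∀ x : ℝ, r x = γ / (σ * β) * (1 - (1 - σ * β / γ * R 0) * (x / S 0) ^ σ))
    (hRhat : ∀ x : ℝ, Rhat x = β / γ * (x + α * σ * r x))
    (p q : ℝ → ℝ)
    (hp : ∀ x : ℝ, p x = (S 0 - x) + γ / β * Real.log (x / S 0))
    (hq : ∀ x : ℝ,
      q x = γ / (σ * β) * Real.log ((1 - σ * β / γ * x) / (1 - σ * β / γ * R 0)) + (x - R 0))
    (hR0le : Rhat (S 0) ≤ 1)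
    (hcase : β / γ * (S 0 + α * σ ^ 2 * R 0) < α * σ)
    (Stilde : ℝ)
    (hSt : Stilde = (β / γ * S 0 / (σ * α * (1 - σ * β / γ * R 0))) ^ (1 / (σ - 1)) * S 0)
    (hRt : 1 < Rhat Stilde)
    (Shat2 : ℝ) (hS2a : Stilde < Shat2) (hS2b : Shat2 < S 0) (hS2root : Rhat Shat2 = 1)
    (hmin : I 0 + p Shat2 - α * q (r Shat2) ≤ 0) :
    StrictAntiOn I (Set.Ici 0) ∧ Filter.Tendsto I Filter.atTop (nhds 0) :=
  sirb_delayed_epidemic_fails_general β γ σ α S I R hβ hγ hσ hα0 hS' hI' hR' hS0 hSpos hIpos hR0lt1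
    r Rhat hr hRhat p q hp hq Stilde hSt Shat2 hS2a hS2b hS2root hmin
end

section
/- Let S, I, R, B : [0,∞) → ℝ be a solution of the SIRB system S' = −βSI, I' = βSI − γI + βσαIR, R' = γI − βσIR, B' = βσ(1−α)IR with β>0, γ>0, σ>0, 0<α<1, initial conditions S(0)>0, I(0)>0, R(0)≥0, B(0)≥0, S(0)+I(0)+R(0)+B(0)=1, and suppose S(t)>0, I(t)>0, R(t)≥0, B(t)≥0 for all t≥0. Then the limits lim_{t→∞} S(t), lim_{t→∞} I(t), lim_{t→∞} R(t), lim_{t→∞} B(t) all exist, and lim_{t→∞} I(t) = 0. -/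
open Filter Set

private lemma sirb_antitoneOn {f f' : ℝ → ℝ} {a : ℝ}
    (hd : ∀ t, a ≤ t → HasDerivAt f (f' t) t) (hneg : ∀ t, a ≤ t → f' t ≤ 0) :
    AntitoneOn f (Set.Ici a) := by
  apply antitoneOn_of_deriv_nonpos (convex_Ici a)
  · exact fun t ht => (hd t ht).continuousAt.continuousWithinAt
  · intro t ht
    rw [interior_Ici] at ht
    exact (hd t ht.le).differentiableAt.differentiableWithinAt
  · intro t ht
    rw [interior_Ici] at ht
    rw [(hd t ht.le).deriv]
    exact hneg t ht.le

private lemma sirb_monotoneOn {f f' : ℝ → ℝ} {a : ℝ}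
    (hd : ∀ t, a ≤ t → HasDerivAt f (f' t) t) (hpos : ∀ t, a ≤ t → 0 ≤ f' t) :
    MonotoneOn f (Set.Ici a) := by
  apply monotoneOn_of_deriv_nonneg (convex_Ici a)
  · exact fun t ht => (hd t ht).continuousAt.continuousWithinAt
  · intro t ht
    rw [interior_Ici] at ht
    exact (hd t ht.le).differentiableAt.differentiableWithinAt
  · intro t ht
    rw [interior_Ici] at ht
    rw [(hd t ht.le).deriv]
    exact hpos t ht.le

private lemma sirb_tendsto_anti {f : ℝ → ℝ} {a m : ℝ}
    (hf : AntitoneOn f (Set.Ici a)) (hm : ∀ t, a ≤ t → m ≤ f t) :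
    ∃ L, Tendsto f atTop (nhds L) := by
  set g : ℝ → ℝ := fun t => f (max t a) with hg
  have hganti : Antitone g := fun s t hst =>
    hf (le_max_right s a) (le_max_right t a) (max_le_max hst le_rfl)
  have hbdd : BddBelow (Set.range g) := ⟨m, by rintro _ ⟨t, rfl⟩; exact hm _ (le_max_right t a)⟩
  refine ⟨⨅ t, g t, (tendsto_atTop_ciInf hganti hbdd).congr' ?_⟩
  filter_upwards [eventually_ge_atTop a] with t ht
  simp [hg, max_eq_left ht]

private lemma sirb_tendsto_mono {f : ℝ → ℝ} {a m : ℝ}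
    (hf : MonotoneOn f (Set.Ici a)) (hm : ∀ t, a ≤ t → f t ≤ m) :
    ∃ L, Tendsto f atTop (nhds L) := by
  set g : ℝ → ℝ := fun t => f (max t a) with hg
  have hgmono : Monotone g := fun s t hst =>
    hf (le_max_right s a) (le_max_right t a) (max_le_max hst le_rfl)
  have hbdd : BddAbove (Set.range g) := ⟨m, by rintro _ ⟨t, rfl⟩; exact hm _ (le_max_right t a)⟩
  refine ⟨⨆ t, g t, (tendsto_atTop_ciSup hgmono hbdd).congr' ?_⟩
  filter_upwards [eventually_ge_atTop a] with t ht
  simp [hg, max_eq_left ht]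

/-- Along solutions of the SIRB system, the limits of `S, I, R, B` as
`t → ∞` all exist, and `I(t) → 0`. -/
theorem sirb_limits_exist (β γ σ α : ℝ) (S I R B : ℝ → ℝ)
    (hβ : 0 < β) (hγ : 0 < γ) (hσ : 0 < σ) (hα0 : 0 < α) (hα1 : α < 1)
    (hS' : ∀ t : ℝ, 0 ≤ t → HasDerivAt S (-(β * S t * I t)) t)
    (hI' : ∀ t : ℝ, 0 ≤ t → HasDerivAt I (β * S t * I t - γ * I t + β * σ * α * I t * R t) t)
    (hR' : ∀ t : ℝ, 0 ≤ t → HasDerivAt R (γ * I t - β * σ * I t * R t) t)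
    (hB' : ∀ t : ℝ, 0 ≤ t → HasDerivAt B (β * σ * (1 - α) * I t * R t) t)
    (hS0 : 0 < S 0) (hI0 : 0 < I 0) (hR0 : 0 ≤ R 0) (hB0 : 0 ≤ B 0)
    (hsum : S 0 + I 0 + R 0 + B 0 = 1)
    (hSpos : ∀ t : ℝ, 0 ≤ t → 0 < S t) (hIpos : ∀ t : ℝ, 0 ≤ t → 0 < I t)
    (hRpos : ∀ t : ℝ, 0 ≤ t → 0 ≤ R t) (hBpos : ∀ t : ℝ, 0 ≤ t → 0 ≤ B t) :
    (∃ Sinf : ℝ, Filter.Tendsto S Filter.atTop (nhds Sinf)) ∧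
    (∃ Iinf : ℝ, Filter.Tendsto I Filter.atTop (nhds Iinf)) ∧
    (∃ Rinf : ℝ, Filter.Tendsto R Filter.atTop (nhds Rinf)) ∧
    (∃ Binf : ℝ, Filter.Tendsto B Filter.atTop (nhds Binf)) ∧
    Filter.Tendsto I Filter.atTop (nhds 0) := by
  -- conservation of total population
  set N : ℝ → ℝ := fun t => S t + I t + R t + B t with hNdef
  have hN' : ∀ t : ℝ, 0 ≤ t → HasDerivAt N 0 t := by
    intro t ht
    have h := (((hS' t ht).add (hI' t ht)).add (hR' t ht)).add (hB' t ht)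
    have he : -(β * S t * I t) + (β * S t * I t - γ * I t + β * σ * α * I t * R t)
        + (γ * I t - β * σ * I t * R t) + β * σ * (1 - α) * I t * R t = 0 := by ring
    rwa [he] at h
  have hNconst : ∀ t : ℝ, 0 ≤ t → S t + I t + R t + B t = 1 := by
    have h1 : AntitoneOn N (Set.Ici 0) :=
      sirb_antitoneOn (f' := fun _ => (0:ℝ)) hN' (fun _ _ => le_rfl)
    have h2 : MonotoneOn N (Set.Ici 0) :=
      sirb_monotoneOn (f' := fun _ => (0:ℝ)) hN' (fun _ _ => le_rfl)
    intro t ht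
    have e1 : N t ≤ N 0 := h1 (self_mem_Ici) ht ht
    have e2 : N 0 ≤ N t := h2 (self_mem_Ici) ht ht
    have : N t = N 0 := le_antisymm e1 e2
    simpa [hNdef, hsum] using this
  -- limit of S
  have hSanti : AntitoneOn S (Set.Ici 0) := by
    refine sirb_antitoneOn (f' := fun t => -(β * S t * I t)) hS' (fun t ht => ?_)
    show -(β * S t * I t) ≤ 0
    exact neg_nonpos.mpr (mul_nonneg (mul_nonneg hβ.le (hSpos t ht).le) (hIpos t ht).le)
  obtain ⟨Sinf, hSlim⟩ := sirb_tendsto_anti hSanti (m := 0) (fun t ht => (hSpos t ht).le)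
  -- limit of B
  have hBmono : MonotoneOn B (Set.Ici 0) := by
    refine sirb_monotoneOn (f' := fun t => β * σ * (1 - α) * I t * R t) hB' (fun t ht => ?_)
    show 0 ≤ β * σ * (1 - α) * I t * R t
    have h1a : (0:ℝ) ≤ 1 - α := by linarith
    exact mul_nonneg (mul_nonneg (mul_nonneg (mul_nonneg hβ.le hσ.le) h1a)
      (hIpos t ht).le) (hRpos t ht)
  obtain ⟨Binf, hBlim⟩ := sirb_tendsto_mono hBmono (m := 1) (by
    intro t ht
    have := hNconst t ht; have := hSpos t ht; have := hIpos t ht; have := hRpos t ht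
    linarith)
  -- the Lyapunov-type function V = S + I + α R
  set V : ℝ → ℝ := fun t => S t + I t + α * R t with hVdef
  have hV' : ∀ t : ℝ, 0 ≤ t → HasDerivAt V (-(γ * (1 - α) * I t)) t := by
    intro t ht
    have h := ((hS' t ht).add (hI' t ht)).add ((hR' t ht).const_mul α)
    have he : -(β * S t * I t) + (β * S t * I t - γ * I t + β * σ * α * I t * R t)
        + α * (γ * I t - β * σ * I t * R t) = -(γ * (1 - α) * I t) := by ring
    rwa [he] at h
  have hVpos : ∀ t : ℝ, 0 ≤ t → 0 ≤ V t := by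
    intro t ht
    have := hSpos t ht; have := hIpos t ht; have := hRpos t ht
    have : 0 ≤ α * R t := mul_nonneg hα0.le (hRpos t ht)
    simp only [hVdef]; nlinarith [hSpos t ht, hIpos t ht]
  have hVanti : AntitoneOn V (Set.Ici 0) := by
    refine sirb_antitoneOn (f' := fun t => -(γ * (1 - α) * I t)) hV' (fun t ht => ?_)
    show -(γ * (1 - α) * I t) ≤ 0
    have h1a : (0:ℝ) ≤ 1 - α := by linarith
    exact neg_nonpos.mpr (mul_nonneg (mul_nonneg hγ.le h1a) (hIpos t ht).le)
  obtain ⟨Vinf, hVlim⟩ := sirb_tendsto_anti hVanti (m := 0) hVpos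
  -- limit of R
  have h1α : (1:ℝ) - α ≠ 0 := by linarith
  have hRlim : Tendsto R atTop (nhds (((1 - Binf) - Vinf) / (1 - α))) := by
    have h : Tendsto (fun t => ((1 - B t) - V t) / (1 - α)) atTop
        (nhds (((1 - Binf) - Vinf) / (1 - α))) :=
      ((tendsto_const_nhds.sub hBlim).sub hVlim).div_const _
    refine h.congr' ?_
    filter_upwards [eventually_ge_atTop (0:ℝ)] with t ht
    have hN := hNconst t ht
    simp only [hVdef]
    rw [div_eq_iff h1α]
    ring_nf
    nlinarith [hNconst t ht]
  set Rinf : ℝ := ((1 - Binf) - Vinf) / (1 - α) with hRinfdef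
  -- limit of I
  have hIlim : Tendsto I atTop (nhds ((1 - Binf) - Sinf - Rinf)) := by
    have h : Tendsto (fun t => ((1 - B t) - S t - R t)) atTop
        (nhds ((1 - Binf) - Sinf - Rinf)) :=
      ((tendsto_const_nhds.sub hBlim).sub hSlim).sub hRlim
    refine h.congr' ?_
    filter_upwards [eventually_ge_atTop (0:ℝ)] with t ht
    have hN := hNconst t ht
    linarith
  set Iinf : ℝ := (1 - Binf) - Sinf - Rinf with hIinfdef
  -- the limit of I is 0
  have hInonneg : (0:ℝ) ≤ Iinf := by
    refine ge_of_tendsto hIlim ?_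
    filter_upwards [eventually_ge_atTop (0:ℝ)] with t ht
    exact (hIpos t ht).le
  have hIzero : Iinf = 0 := by
    by_contra hne
    have hpos : 0 < Iinf := lt_of_le_of_ne hInonneg (Ne.symm hne)
    set c : ℝ := γ * (1 - α) * (Iinf / 2) with hcdef
    have hc : 0 < c := by
      apply mul_pos (mul_pos hγ (by linarith)) (by linarith)
    have hev : ∀ᶠ t in atTop, Iinf / 2 < I t :=
      hIlim.eventually (eventually_gt_nhds (by linarith))
    obtain ⟨T0, hT0⟩ := (hev.and (eventually_ge_atTop (0:ℝ))).exists_forall_of_atTop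
    set T : ℝ := max T0 0 with hTdef
    have hT0le : (0:ℝ) ≤ T := le_max_right _ _
    have hTI : ∀ t, T ≤ t → Iinf / 2 < I t ∧ 0 ≤ t := by
      intro t ht
      have := hT0 t (le_trans (le_max_left _ _) ht)
      exact ⟨this.1, this.2⟩
    -- U = V + c t is antitone on [T, ∞)
    set U : ℝ → ℝ := fun t => V t + c * t with hUdef
    have hU' : ∀ t, T ≤ t → HasDerivAt U (-(γ * (1 - α) * I t) + c) t := by
      intro t ht
      have h2 : HasDerivAt (fun y : ℝ => c * y) (c * 1) t := (hasDerivAt_id t).const_mul c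
      rw [mul_one] at h2
      exact (hV' t (hTI t ht).2).add h2
    have hUanti : AntitoneOn U (Set.Ici T) := by
      refine sirb_antitoneOn (f' := fun t => -(γ * (1 - α) * I t) + c) hU' (fun t ht => ?_)
      show -(γ * (1 - α) * I t) + c ≤ 0
      have hI2 := (hTI t ht).1
      have h1 : c ≤ γ * (1 - α) * I t := by
        rw [hcdef]
        apply mul_le_mul_of_nonneg_left hI2.le
        nlinarith
      linarith
    set t1 : ℝ := T + V T / c + 1 with ht1def
    have hVT : 0 ≤ V T := hVpos T hT0le
    have ht1ge : T ≤ t1 := by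
      have : 0 ≤ V T / c := div_nonneg hVT hc.le
      rw [ht1def]; linarith
    have hUle : U t1 ≤ U T := hUanti (self_mem_Ici) ht1ge ht1ge
    have hct : c * (V T / c) = V T := by field_simp
    have hVt1 : V t1 ≤ -c := by
      have h2 : V t1 + c * t1 ≤ V T + c * T := hUle
      have h3 : c * t1 = c * T + V T + c := by
        rw [ht1def, mul_add, mul_add, hct, mul_one]
      linarith
    have := hVpos t1 (le_trans hT0le ht1ge)
    linarith
  refine ⟨⟨Sinf, hSlim⟩, ⟨Iinf, hIlim⟩, ⟨Rinf, hRlim⟩, ⟨Binf, hBlim⟩, ?_⟩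
  rwa [hIzero] at hIlim
end

section
/- Let S, I, R, B : [0,∞) → ℝ be a solution of the SIRB system S' = −βSI, I' = βSI − γI + βσαIR, R' = γI − βσIR, B' = βσ(1−α)IR with β>0, γ>0, σ>0, 0<α<1, initial conditions S(0)>0, I(0)>0, R(0)≥0 with (σβ/γ)·R(0) < 1, B(0)≥0, S(0)+I(0)+R(0)+B(0)=1, and suppose S(t)>0 and I(t)>0 for all t≥0. Let r(S) := (γ/(σβ))·(1 − (1 − (σβ/γ)·R(0))·(S/S(0))^σ). Then for every t ≥ 0, ∫_{S(0)}^{S(t)} σ·r(S)/S dS = (γ/(σβ))·ln((1 − (σβ/γ)R(t))/(1 − (σβ/γ)R(0))) + (R(t) − R(0)). -/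
/-!
With `k = σβ/γ`, the quantity `(1 - k R) S^(-σ)` is conserved along the flow: differentiating
it, the terms produced by `R' = γI - βσIR` and by `S' = -βSI` cancel because `kγ = σβ`.
Hence `1 - k R(t) = (1 - k R(0)) (S(t)/S(0))^σ`, which is how `r` is obtained. The integrand
`σ r(x)/x` has the explicit primitive `k⁻¹ (σ log x - (1 - k R(0)) (x/S(0))^σ)`, and evaluating
it between `S(0)` and `S(t)` gives the right-hand side after substituting the conservation law.
-/

open Real Set

theorem eq_apply_zero_of_hasDerivAt_zero {E : Type*} [NormedAddCommGroup E] [NormedSpace ℝ E]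
    {f : ℝ → E} (hf : ∀ s, 0 ≤ s → HasDerivAt f 0 s) {t : ℝ} (ht : 0 ≤ t) : f t = f 0 :=
  constant_of_has_deriv_right_zero
    (fun s hs => (hf s hs.1).continuousAt.continuousWithinAt)
    (fun s hs => (hf s hs.1).hasDerivWithinAt) t ⟨ht, le_rfl⟩

theorem integral_mul_one_sub_mul_div_rpow_div {a b : ℝ} (ha : 0 < a) (hb : 0 < b) (σ c : ℝ) :
    ∫ x in a..b, σ * (1 - c * (x / a) ^ σ) / x = σ * log (b / a) - c * ((b / a) ^ σ - 1) := by
  have hpos : ∀ x ∈ uIcc a b, 0 < x := fun x hx => (lt_min ha hb).trans_le hx.1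
  have hderiv : ∀ x ∈ uIcc a b, HasDerivAt (fun x => σ * log x - c * (x / a) ^ σ)
      (σ * (1 - c * (x / a) ^ σ) / x) x := by
    intro x hx
    have hxa : 0 < x / a := div_pos (hpos x hx) ha
    have hpow : HasDerivAt (fun y => (y / a) ^ σ) (1 / a * σ * (x / a) ^ (σ - 1)) x := by
      refine HasDerivAt.rpow_const ?_ (Or.inl hxa.ne')
      simpa using (hasDerivAt_id x).div_const a
    refine (((hasDerivAt_log (hpos x hx).ne').const_mul σ).sub (hpow.const_mul c)).congr_deriv ?_
    rw [rpow_sub hxa, rpow_one]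
    field_simp
  have hcont : ContinuousOn (fun x => σ * (1 - c * (x / a) ^ σ) / x) (uIcc a b) :=
    ((continuousOn_const.mul (continuousOn_const.sub (continuousOn_const.mul
      ((continuousOn_id.div_const a).rpow_const fun x hx =>
        Or.inl (div_pos (hpos x hx) ha).ne'))))).div continuousOn_id fun x hx => (hpos x hx).ne'
  rw [intervalIntegral.integral_eq_sub_of_hasDerivAt hderiv hcont.intervalIntegrable,
    log_div hb.ne' ha.ne', div_self ha.ne', one_rpow]
  ring

section SIRB

variable {β γ σ : ℝ} {S I R : ℝ → ℝ}

theorem hasDerivAt_one_sub_mul_mul_rpow_neg (hγ : γ ≠ 0) {s : ℝ}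
    (hS : HasDerivAt S (-(β * S s * I s)) s) (hR : HasDerivAt R (γ * I s - β * σ * I s * R s) s)
    (hSs : 0 < S s) :
    HasDerivAt (fun s => (1 - σ * β / γ * R s) * S s ^ (-σ)) 0 s := by
  have hkγ : σ * β / γ * γ = σ * β := div_mul_cancel₀ _ hγ
  have hSσ : S s ^ (-σ) = S s ^ (-σ - 1) * S s := by
    rw [← rpow_add_one hSs.ne', sub_add_cancel]
  refine (((hR.const_mul (σ * β / γ)).const_sub 1).mul
    (hS.rpow_const (Or.inl hSs.ne'))).congr_deriv ?_
  rw [hSσ]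
  linear_combination -(S s ^ (-σ - 1) * S s * I s) * hkγ

theorem one_sub_mul_eq_mul_rpow_div (hγ : γ ≠ 0)
    (hS' : ∀ t, 0 ≤ t → HasDerivAt S (-(β * S t * I t)) t)
    (hR' : ∀ t, 0 ≤ t → HasDerivAt R (γ * I t - β * σ * I t * R t) t)
    (hSpos : ∀ t, 0 ≤ t → 0 < S t) {t : ℝ} (ht : 0 ≤ t) :
    1 - σ * β / γ * R t = (1 - σ * β / γ * R 0) * (S t / S 0) ^ σ := by
  have hconst := eq_apply_zero_of_hasDerivAt_zero
    (fun s hs => hasDerivAt_one_sub_mul_mul_rpow_neg hγ (hS' s hs) (hR' s hs) (hSpos s hs)) ht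
  have hS0 := hSpos 0 le_rfl
  have hSt := hSpos t ht
  simp only [rpow_neg hSt.le, rpow_neg hS0.le] at hconst
  rw [div_rpow hSt.le hS0.le]
  have := (rpow_pos_of_pos hSt σ).ne'
  have := (rpow_pos_of_pos hS0 σ).ne'
  field_simp at hconst ⊢
  linear_combination hconst

end SIRB

theorem sirb_integral_identity_general (β γ σ : ℝ) (S I R : ℝ → ℝ)
    (hβ : 0 < β) (hγ : 0 < γ) (hσ : 0 < σ)
    (hS' : ∀ t : ℝ, 0 ≤ t → HasDerivAt S (-(β * S t * I t)) t)
    (hR' : ∀ t : ℝ, 0 ≤ t → HasDerivAt R (γ * I t - β * σ * I t * R t) t)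
    (hS0 : 0 < S 0)
    (hSpos : ∀ t : ℝ, 0 ≤ t → 0 < S t)
    (hR0lt1 : σ * β / γ * R 0 < 1)
    (r : ℝ → ℝ)
    (hr : ∀ x : ℝ, r x = γ / (σ * β) * (1 - (1 - σ * β / γ * R 0) * (x / S 0) ^ σ)) :
    ∀ t : ℝ, 0 ≤ t →
      (∫ x in (S 0)..(S t), σ * r x / x) =
        γ / (σ * β) * Real.log ((1 - σ * β / γ * R t) / (1 - σ * β / γ * R 0))
          + (R t - R 0) := by
  intro t ht
  have hSt := hSpos t ht
  have hconserved := one_sub_mul_eq_mul_rpow_div hγ.ne' hS' hR' hSpos ht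
  set c := 1 - σ * β / γ * R 0
  have hintegrand : (fun x => σ * r x / x) =
      fun x => γ / (σ * β) * (σ * (1 - c * (x / S 0) ^ σ) / x) := by
    ext x
    rw [hr]
    ring
  have hc0 : c ≠ 0 := by linarith
  have hincrement : c * ((S t / S 0) ^ σ - 1) = σ * β / γ * (R 0 - R t) := by
    linear_combination -hconserved
  rw [hintegrand, intervalIntegral.integral_const_mul,
    integral_mul_one_sub_mul_div_rpow_div hS0 hSt, hconserved, mul_div_cancel_left₀ _ hc0,
    log_rpow (div_pos hSt hS0), hincrement]
  field_simp
  ring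

/-- Along solutions of the SIRB system with `(σβ/γ)R(0) < 1`,
`∫_(S 0)^(S t) σ r(x)/x dx = (γ/(σβ)) ln((1 − (σβ/γ)R t)/(1 − (σβ/γ)R 0)) + (R t − R 0)`
for all `t ≥ 0`, where `r` expresses `R` as a function of `S`. -/
theorem sirb_integral_identity (β γ σ α : ℝ) (S I R B : ℝ → ℝ)
    (hβ : 0 < β) (hγ : 0 < γ) (hσ : 0 < σ) (hα0 : 0 < α) (hα1 : α < 1)
    (hS' : ∀ t : ℝ, 0 ≤ t → HasDerivAt S (-(β * S t * I t)) t)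
    (hI' : ∀ t : ℝ, 0 ≤ t → HasDerivAt I (β * S t * I t - γ * I t + β * σ * α * I t * R t) t)
    (hR' : ∀ t : ℝ, 0 ≤ t → HasDerivAt R (γ * I t - β * σ * I t * R t) t)
    (hB' : ∀ t : ℝ, 0 ≤ t → HasDerivAt B (β * σ * (1 - α) * I t * R t) t)
    (hS0 : 0 < S 0) (hI0 : 0 < I 0) (hR0 : 0 ≤ R 0) (hB0 : 0 ≤ B 0)
    (hsum : S 0 + I 0 + R 0 + B 0 = 1)
    (hSpos : ∀ t : ℝ, 0 ≤ t → 0 < S t) (hIpos : ∀ t : ℝ, 0 ≤ t → 0 < I t)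
    (hR0lt1 : σ * β / γ * R 0 < 1)
    (r : ℝ → ℝ)
    (hr : ∀ x : ℝ, r x = γ / (σ * β) * (1 - (1 - σ * β / γ * R 0) * (x / S 0) ^ σ)) :
    ∀ t : ℝ, 0 ≤ t →
      (∫ x in (S 0)..(S t), σ * r x / x) =
        γ / (σ * β) * Real.log ((1 - σ * β / γ * R t) / (1 - σ * β / γ * R 0))
          + (R t - R 0) :=
  sirb_integral_identity_general β γ σ S I R hβ hγ hσ hS' hR' hS0 hSpos hR0lt1 r hr
end

section
/- Let S, I, R, B : [0,∞) → ℝ be a solution of the SIRB system S' = −βSI, I' = βSI − γI + βσαIR, R' = γI − βσIR, B' = βσ(1−α)IR with β>0, γ>0, σ>0, 0<α<1, initial conditions S(0)>0, I(0)>0, R(0)≥0 with (σβ/γ)·R(0) < 1, B(0)≥0, S(0)+I(0)+R(0)+B(0)=1, and suppose S(t)>0 and I(t)>0 for all t≥0. Then for every t ≥ 0: I(t) = I(0) + (S(0) − S(t)) + (γ/β)·ln(S(t)/S(0)) − α·[(γ/(σβ))·ln((1 − (σβ/γ)R(t))/(1 − (σβ/γ)R(0))) + (R(t) − R(0))]. 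-/
/-!
Along a solution, `I + S - (γ/β) ln S + α ((γ/(σβ)) ln u + R)` with `u = 1 - (σβ/γ) R` is a first
integral: `(ln S)' = -βI` and `(ln u)' = -σβI` absorb the `-γI` and reinfection terms of `I'`.
The logarithm of `u` is legitimate because `u' = -σβ I u`, so `u` keeps the sign of `u 0 > 0`.
-/

open Set Real

theorem exists_hasDerivAt_eq_of_continuousOn_Ici {a : ℝ → ℝ} {c : ℝ} (ha : ContinuousOn a (Ici c)) :
    ∃ A : ℝ → ℝ, ∀ t, c ≤ t → HasDerivAt A (a t) t := by
  have hext : Continuous fun s => a (max s c) :=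
    ha.comp_continuous (continuous_id.max continuous_const) fun s => le_max_right s c
  refine ⟨fun x => ∫ s in c..x, a (max s c), fun t ht => ?_⟩
  simpa [max_eq_left ht] using (hext.integral_hasStrictDerivAt c t).hasDerivAt

theorem eq_of_hasDerivAt_eq_zero_Ici {f : ℝ → ℝ} {c : ℝ} (hf : ∀ t, c ≤ t → HasDerivAt f 0 t) :
    ∀ t, c ≤ t → f t = f c := fun t ht =>
  constant_of_has_deriv_right_zero
    (fun s hs => (hf s hs.1).continuousAt.continuousWithinAt)
    (fun s hs => (hf s hs.1).hasDerivWithinAt) t ⟨ht, le_rfl⟩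

theorem pos_of_hasDerivAt_eq_mul_self_Ici {a u : ℝ → ℝ} {c : ℝ} (ha : ContinuousOn a (Ici c))
    (hu : ∀ t, c ≤ t → HasDerivAt u (a t * u t) t) (hc : 0 < u c) :
    ∀ t, c ≤ t → 0 < u t := by
  obtain ⟨A, hA⟩ := exists_hasDerivAt_eq_of_continuousOn_Ici ha
  have hconst : ∀ t, c ≤ t → u t * exp (-A t) = u c * exp (-A c) :=
    eq_of_hasDerivAt_eq_zero_Ici fun t ht =>
      ((hu t ht).mul (hA t ht).neg.exp).congr_deriv (by ring)
  intro t ht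
  have hut : u t = u c * exp (-A c) * exp (A t) := by
    rw [← hconst t ht, mul_assoc, ← exp_add, neg_add_cancel, exp_zero, mul_one]
  rw [hut]
  positivity

namespace SIRB

noncomputable def invariant (β γ σ α : ℝ) (S I R : ℝ → ℝ) (t : ℝ) : ℝ :=
  I t + S t - γ / β * log (S t) + α * (γ / (σ * β) * log (1 - σ * β / γ * R t) + R t)

variable {β γ σ α : ℝ} {S I R : ℝ → ℝ}

theorem hasDerivAt_one_sub_mul_R (hγ : γ ≠ 0) {t : ℝ}
    (hR : HasDerivAt R (γ * I t - β * σ * I t * R t) t) :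
    HasDerivAt (fun s => 1 - σ * β / γ * R s)
      (-(σ * β * I t) * (1 - σ * β / γ * R t)) t :=
  ((hR.const_mul (σ * β / γ)).const_sub 1).congr_deriv (by field_simp)

theorem one_sub_mul_R_pos (hγ : γ ≠ 0)
    (hI : ContinuousOn I (Ici 0))
    (hR : ∀ t, 0 ≤ t → HasDerivAt R (γ * I t - β * σ * I t * R t) t)
    (hR0 : σ * β / γ * R 0 < 1) :
    ∀ t, 0 ≤ t → 0 < 1 - σ * β / γ * R t :=
  pos_of_hasDerivAt_eq_mul_self_Ici (hI.const_smul (σ * β)).neg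
    (fun t ht => hasDerivAt_one_sub_mul_R hγ (hR t ht)) (sub_pos.2 hR0)

theorem hasDerivAt_invariant (hβ : β ≠ 0) (hγ : γ ≠ 0) (hσ : σ ≠ 0) {t : ℝ}
    (hS : HasDerivAt S (-(β * S t * I t)) t)
    (hI : HasDerivAt I (β * S t * I t - γ * I t + β * σ * α * I t * R t) t)
    (hR : HasDerivAt R (γ * I t - β * σ * I t * R t) t)
    (hSt : S t ≠ 0) (hut : 1 - σ * β / γ * R t ≠ 0) :
    HasDerivAt (invariant β γ σ α S I R) 0 t := by
  have hlogS : HasDerivAt (fun s => log (S s)) (-(β * I t)) t :=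
    (hS.log hSt).congr_deriv (by field_simp)
  have hlogu : HasDerivAt (fun s => log (1 - σ * β / γ * R s)) (-(σ * β * I t)) t :=
    ((hasDerivAt_one_sub_mul_R hγ hR).log hut).congr_deriv
      (mul_div_cancel_right₀ _ hut)
  refine (((hI.add hS).sub (hlogS.const_mul (γ / β))).add
    (((hlogu.const_mul (γ / (σ * β))).add hR).const_mul α)).congr_deriv ?_
  field_simp
  ring

end SIRB

theorem sirb_explicit_I_general (β γ σ α : ℝ) (S I R : ℝ → ℝ)
    (hβ : 0 < β) (hγ : 0 < γ) (hσ : 0 < σ)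
    (hS' : ∀ t : ℝ, 0 ≤ t → HasDerivAt S (-(β * S t * I t)) t)
    (hI' : ∀ t : ℝ, 0 ≤ t → HasDerivAt I (β * S t * I t - γ * I t + β * σ * α * I t * R t) t)
    (hR' : ∀ t : ℝ, 0 ≤ t → HasDerivAt R (γ * I t - β * σ * I t * R t) t)
    (hSpos : ∀ t : ℝ, 0 ≤ t → 0 < S t)
    (hR0lt1 : σ * β / γ * R 0 < 1) :
    ∀ t : ℝ, 0 ≤ t →
      I t = I 0 + (S 0 - S t) + γ / β * Real.log (S t / S 0)
        - α * (γ / (σ * β) * Real.log ((1 - σ * β / γ * R t) / (1 - σ * β / γ * R 0))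
          + (R t - R 0)) := by
  have hIcont : ContinuousOn I (Ici 0) := fun t ht => (hI' t ht).continuousAt.continuousWithinAt
  have hupos := SIRB.one_sub_mul_R_pos hγ.ne' hIcont hR' hR0lt1
  have hconst := eq_of_hasDerivAt_eq_zero_Ici fun t ht =>
    SIRB.hasDerivAt_invariant hβ.ne' hγ.ne' hσ.ne' (hS' t ht) (hI' t ht) (hR' t ht)
      (hSpos t ht).ne' (hupos t ht).ne'
  intro t ht
  have ht0 := hconst t ht
  simp only [SIRB.invariant] at ht0
  rw [log_div (hSpos t ht).ne' (hSpos 0 le_rfl).ne',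
    log_div (hupos t ht).ne' (hupos 0 le_rfl).ne']
  linarith

/-- Explicit solution for `I`:
`I t = I 0 + (S 0 − S t) + (γ/β) ln(S t / S 0)
      − α [(γ/(σβ)) ln((1 − (σβ/γ)R t)/(1 − (σβ/γ)R 0)) + (R t − R 0)]`. -/
theorem sirb_explicit_I (β γ σ α : ℝ) (S I R B : ℝ → ℝ)
    (hβ : 0 < β) (hγ : 0 < γ) (hσ : 0 < σ) (hα0 : 0 < α) (hα1 : α < 1)
    (hS' : ∀ t : ℝ, 0 ≤ t → HasDerivAt S (-(β * S t * I t)) t)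
    (hI' : ∀ t : ℝ, 0 ≤ t → HasDerivAt I (β * S t * I t - γ * I t + β * σ * α * I t * R t) t)
    (hR' : ∀ t : ℝ, 0 ≤ t → HasDerivAt R (γ * I t - β * σ * I t * R t) t)
    (hB' : ∀ t : ℝ, 0 ≤ t → HasDerivAt B (β * σ * (1 - α) * I t * R t) t)
    (hS0 : 0 < S 0) (hI0 : 0 < I 0) (hR0 : 0 ≤ R 0) (hB0 : 0 ≤ B 0)
    (hsum : S 0 + I 0 + R 0 + B 0 = 1)
    (hSpos : ∀ t : ℝ, 0 ≤ t → 0 < S t) (hIpos : ∀ t : ℝ, 0 ≤ t → 0 < I t)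
    (hR0lt1 : σ * β / γ * R 0 < 1) :
    ∀ t : ℝ, 0 ≤ t →
      I t = I 0 + (S 0 - S t) + γ / β * Real.log (S t / S 0)
        - α * (γ / (σ * β) * Real.log ((1 - σ * β / γ * R t) / (1 - σ * β / γ * R 0))
          + (R t - R 0)) :=
  sirb_explicit_I_general β γ σ α S I R hβ hγ hσ hS' hI' hR' hSpos hR0lt1
end

section
/- Let S, I, R, B : [0,∞) → ℝ be a solution of the SIRB system S' = −βSI, I' = βSI − γI + βσαIR, R' = γI − βσIR, B' = βσ(1−α)IR with β>0, γ>0, σ>0, 0<α<1, initial conditions S(0)>0, I(0)>0, R(0)≥0 with (σβ/γ)·R(0) < 1, B(0)≥0, S(0)+I(0)+R(0)+B(0)=1, and suppose S(t)>0 and I(t)>0 for all t≥0. Then for every t ≥ 0: B(t) = B(0) − (1 − α)·[(γ/(σβ))·ln((1 − (σβ/γ)R(t))/(1 − (σβ/γ)R(0))) + (R(t) − R(0))]. -/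
/-!
Write `u = 1 - (σβ/γ) R`. The equation for `R` says `u' = -σβ I u`, so an integrating factor keeps
`u` positive, and then `(log u)' = -σβ I`. Consequently
`B' = βσ(1-α) I R = -(1-α) ((γ/(σβ)) (log u)' + R')`, i.e.
`B + (1-α) ((γ/(σβ)) log u + R)` is conserved along the solution.
-/

open Real Set

lemma eq_of_hasDerivAt_zero_of_nonneg {f : ℝ → ℝ} (hf : ∀ t, 0 ≤ t → HasDerivAt f 0 t)
    {t : ℝ} (ht : 0 ≤ t) : f t = f 0 :=
  constant_of_has_deriv_right_zero (fun x hx => (hf x hx.1).continuousAt.continuousWithinAt)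
    (fun x hx => (hf x hx.1).hasDerivWithinAt) t ⟨ht, le_rfl⟩

/-- `u * exp (-∫₀ᵗ k)` is constant; `k` is extended to `ℝ` by `k 0` to make the integral a primitive. -/
lemma pos_of_hasDerivAt_mul_self {u k : ℝ → ℝ} (hk : ContinuousOn k (Ici 0))
    (hu : ∀ t, 0 ≤ t → HasDerivAt u (k t * u t) t) (hu0 : 0 < u 0) {t : ℝ} (ht : 0 ≤ t) :
    0 < u t := by
  have hk_ext : Continuous fun s => k (max s 0) :=
    hk.comp_continuous (continuous_id.max continuous_const) fun s => le_max_right s 0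
  set K : ℝ → ℝ := fun t => ∫ s in (0 : ℝ)..t, k (max s 0)
  have hK : ∀ t, HasDerivAt K (k (max t 0)) t := fun t =>
    (hk_ext.integral_hasStrictDerivAt 0 t).hasDerivAt
  have hconst : ∀ t, 0 ≤ t → HasDerivAt (fun s => u s * exp (-K s)) 0 t := by
    intro t ht
    refine ((hu t ht).mul (hK t).neg.exp).congr_deriv ?_
    rw [max_eq_left ht]
    ring
  have key := eq_of_hasDerivAt_zero_of_nonneg hconst ht
  have hK0 : K 0 = 0 := intervalIntegral.integral_same
  simp only [hK0, neg_zero, exp_zero, mul_one] at key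
  exact pos_of_mul_pos_left (key ▸ hu0) (exp_pos _).le

section SIRB

variable {β γ σ α : ℝ} {I R B : ℝ → ℝ} {t : ℝ}

lemma sirb_hasDerivAt_one_sub_R (hγ : γ ≠ 0)
    (hR : HasDerivAt R (γ * I t - β * σ * I t * R t) t) :
    HasDerivAt (fun s => 1 - σ * β / γ * R s) (-(σ * β * I t) * (1 - σ * β / γ * R t)) t := by
  refine ((hR.const_mul (σ * β / γ)).const_sub 1).congr_deriv ?_
  field_simp

lemma sirb_one_sub_R_pos (hγ : γ ≠ 0) (hI : ContinuousOn I (Ici 0))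
    (hR : ∀ t, 0 ≤ t → HasDerivAt R (γ * I t - β * σ * I t * R t) t)
    (hR0 : σ * β / γ * R 0 < 1) (ht : 0 ≤ t) :
    0 < 1 - σ * β / γ * R t :=
  pos_of_hasDerivAt_mul_self (k := fun s => -(σ * β * I s)) (continuousOn_const.mul hI).neg
    (fun s hs => sirb_hasDerivAt_one_sub_R hγ (hR s hs)) (sub_pos.mpr hR0) ht

lemma sirb_hasDerivAt_boosting_invariant (hβ : β ≠ 0) (hγ : γ ≠ 0) (hσ : σ ≠ 0)
    (hR : HasDerivAt R (γ * I t - β * σ * I t * R t) t)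
    (hB : HasDerivAt B (β * σ * (1 - α) * I t * R t) t) (hu : 1 - σ * β / γ * R t ≠ 0) :
    HasDerivAt
      (fun s => B s + (1 - α) * (γ / (σ * β) * log (1 - σ * β / γ * R s) + R s)) 0 t := by
  refine (hB.add ((((sirb_hasDerivAt_one_sub_R hγ hR).log hu).const_mul _ |>.add hR).const_mul _)
    ).congr_deriv ?_
  rw [mul_div_cancel_right₀ _ hu]
  field_simp
  ring

end SIRB

theorem sirb_explicit_B_general (β γ σ α : ℝ) (S I R B : ℝ → ℝ)
    (hβ : 0 < β) (hγ : 0 < γ) (hσ : 0 < σ)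
    (hI' : ∀ t : ℝ, 0 ≤ t → HasDerivAt I (β * S t * I t - γ * I t + β * σ * α * I t * R t) t)
    (hR' : ∀ t : ℝ, 0 ≤ t → HasDerivAt R (γ * I t - β * σ * I t * R t) t)
    (hB' : ∀ t : ℝ, 0 ≤ t → HasDerivAt B (β * σ * (1 - α) * I t * R t) t)
    (hR0lt1 : σ * β / γ * R 0 < 1) :
    ∀ t : ℝ, 0 ≤ t →
      B t = B 0
        - (1 - α) * (γ / (σ * β) * Real.log ((1 - σ * β / γ * R t) / (1 - σ * β / γ * R 0))
          + (R t - R 0)) := by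
  intro t ht
  have hI : ContinuousOn I (Ici 0) := fun s hs => (hI' s hs).continuousAt.continuousWithinAt
  have hu : ∀ s, 0 ≤ s → 0 < 1 - σ * β / γ * R s := fun s hs =>
    sirb_one_sub_R_pos hγ.ne' hI hR' hR0lt1 hs
  have hconst := eq_of_hasDerivAt_zero_of_nonneg (fun s hs =>
    sirb_hasDerivAt_boosting_invariant (α := α) hβ.ne' hγ.ne' hσ.ne' (hR' s hs) (hB' s hs)
      (hu s hs).ne') ht
  rw [log_div (hu t ht).ne' (hu 0 le_rfl).ne']
  linarith

/-- Explicit solution for `B`: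
`B t = B 0 − (1 − α)[(γ/(σβ)) ln((1 − (σβ/γ)R t)/(1 − (σβ/γ)R 0)) + (R t − R 0)]`. -/
theorem sirb_explicit_B (β γ σ α : ℝ) (S I R B : ℝ → ℝ)
    (hβ : 0 < β) (hγ : 0 < γ) (hσ : 0 < σ) (hα0 : 0 < α) (hα1 : α < 1)
    (hS' : ∀ t : ℝ, 0 ≤ t → HasDerivAt S (-(β * S t * I t)) t)
    (hI' : ∀ t : ℝ, 0 ≤ t → HasDerivAt I (β * S t * I t - γ * I t + β * σ * α * I t * R t) t)
    (hR' : ∀ t : ℝ, 0 ≤ t → HasDerivAt R (γ * I t - β * σ * I t * R t) t)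
    (hB' : ∀ t : ℝ, 0 ≤ t → HasDerivAt B (β * σ * (1 - α) * I t * R t) t)
    (hS0 : 0 < S 0) (hI0 : 0 < I 0) (hR0 : 0 ≤ R 0) (hB0 : 0 ≤ B 0)
    (hsum : S 0 + I 0 + R 0 + B 0 = 1)
    (hSpos : ∀ t : ℝ, 0 ≤ t → 0 < S t) (hIpos : ∀ t : ℝ, 0 ≤ t → 0 < I t)
    (hR0lt1 : σ * β / γ * R 0 < 1) :
    ∀ t : ℝ, 0 ≤ t →
      B t = B 0
        - (1 - α) * (γ / (σ * β) * Real.log ((1 - σ * β / γ * R t) / (1 - σ * β / γ * R 0))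
          + (R t - R 0)) :=
  sirb_explicit_B_general β γ σ α S I R B hβ hγ hσ hI' hR' hB' hR0lt1
end
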